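/- arXiv:2406.00292 — 6 statements merged into one kernel-verified Lean document; each statement's English description precedes it below -/
import Mathlib

section
/- Let G be a graph with a perfect matching, and let S and S' be two disjoint subsets of V(G) such that every neighbor of a vertex in S lies in S', and |S'| ≤ |S| + 1. If S is an independent set of G, then S' is a barrier of G, i.e., the number of odd components of G − S' equals |S'|. -/
open SimpleGraph Set

universe u
variable {V : Type u}

/-- Number of odd components of a graph. -/
noncomputable def oddComps (G : SimpleGraph V) : ℕ :=
  Nat.card {c : G.ConnectedComponent // Odd (Nat.card c.supp)}

/-- `S` is a barrier of `G`: the number of odd components of `G − S` equals `|S|`. -/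
def IsBarrier (G : SimpleGraph V) (S : Set V) : Prop :=
  oddComps (G.induce Sᶜ) = S.ncard

/-- `G` has a perfect matching. -/
def HasPM (G : SimpleGraph V) : Prop :=
  ∃ M : Subgraph G, M.IsPerfectMatching

/-- `G` is matching covered. -/
def MatchingCovered (G : SimpleGraph V) : Prop :=
  G.Connected ∧ G.edgeSet.Nonempty ∧
    ∀ e ∈ G.edgeSet, ∃ M : Subgraph G, M.IsPerfectMatching ∧ e ∈ M.edgeSet

/-- An edge `e` of a matching covered graph `G` is removable. -/
def Removable (G : SimpleGraph V) (e : Sym2 V) : Prop :=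
  e ∈ G.edgeSet ∧ MatchingCovered (G.deleteEdges {e})

/-- `G` is 3-connected. -/
def ThreeConnected (G : SimpleGraph V) : Prop :=
  4 ≤ Nat.card V ∧ ∀ S : Set V, S.ncard ≤ 2 → (G.induce Sᶜ).Connected

/-- A brick. -/
def IsBrick (G : SimpleGraph V) : Prop :=
  ThreeConnected G ∧ ∀ x y : V, x ≠ y → HasPM (G.induce ({x, y} : Set V)ᶜ)

/-- neighbours outside `S` of vertices of `S`. -/
def Nbrs (G : SimpleGraph V) (S : Set V) : Set V :=
  {v | v ∉ S ∧ ∃ u ∈ S, G.Adj u v}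

/-- factor-critical graph. -/
def FactorCritical (G : SimpleGraph V) : Prop :=
  ∀ v : V, HasPM (G.induce ({v} : Set V)ᶜ)

/-- `(U, W)` is a bipartition of `G`. -/
def IsBipartition (G : SimpleGraph V) (U W : Set V) : Prop :=
  Disjoint U W ∧ U ∪ W = Set.univ ∧
    ∀ a b : V, G.Adj a b → (a ∈ U ∧ b ∈ W) ∨ (a ∈ W ∧ b ∈ U)

/-!
Every vertex of `S` is isolated in `G - S'`, so it is an odd component on its own and
`|S| ≤ o(G - S')`; Tutte's condition for the perfect matching gives `o(G - S') ≤ |S'| ≤ |S| + 1`.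
Since `|V(G)|` is even, `o(G - S') ≡ |V(G) - S'| ≡ |S'| (mod 2)`, which leaves `o(G - S') = |S'|`.
-/

namespace SimpleGraph

variable {W : Type*}

lemma oddComps_eq_ncard_oddComponents (G : SimpleGraph V) :
    oddComps G = G.oddComponents.ncard := rfl

lemma oddComps_congr {G : SimpleGraph V} {G' : SimpleGraph W} (φ : G ≃g G') :
    oddComps G = oddComps G' :=
  Nat.card_congr <| φ.connectedComponentEquiv.subtypeEquiv fun c => by
    rw [Nat.card_congr (ConnectedComponent.isoEquivSupp φ c)]

def deleteVertsTopIso (G : SimpleGraph V) (u : Set V) :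
    ((⊤ : G.Subgraph).deleteVerts u).coe ≃g G.induce uᶜ where
  toEquiv := Equiv.setCongr (by simp [Set.compl_eq_univ_sdiff])
  map_rel_iff' := by
    rintro ⟨a, ha⟩ ⟨b, hb⟩
    simp only [Subgraph.induce_verts, Subgraph.verts_top, mem_sdiff, mem_univ, true_and] at ha hb
    simp [ha, hb]

lemma oddComps_induce_compl_le_of_isPerfectMatching [Finite V] {G : SimpleGraph V}
    {M : G.Subgraph} (hM : M.IsPerfectMatching) (u : Set V) : oddComps (G.induce uᶜ) ≤ u.ncard := by
  rw [← oddComps_congr (G.deleteVertsTopIso u), oddComps_eq_ncard_oddComponents]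
  exact not_lt.mp (not_isTutteViolator_of_isPerfectMatching hM u)

lemma even_oddComps_induce_compl_add_ncard [Finite V] {G : SimpleGraph V}
    (hV : Even (Nat.card V)) (u : Set V) : Even (oddComps (G.induce uᶜ) + u.ncard) := by
  have hodd := odd_ncard_oddComponents (G := G.induce uᶜ)
  rw [← oddComps_eq_ncard_oddComponents, Nat.card_coe_set_eq] at hodd
  rw [← ncard_add_ncard_compl u, Nat.even_add] at hV
  rw [Nat.even_add, ← Nat.not_odd_iff_even, ← Nat.not_odd_iff_even, hodd, Nat.not_odd_iff_even,
    Nat.not_odd_iff_even]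
  exact hV.symm

lemma eq_of_reachable_of_forall_not_adj {G : SimpleGraph V} {v w : V}
    (hv : ∀ x, ¬ G.Adj v x) (h : G.Reachable v w) : v = w := by
  obtain ⟨p⟩ := h
  cases p with
  | nil => rfl
  | cons hadj _ => exact absurd hadj (hv _)

lemma ncard_le_oddComps_of_forall_not_adj [Finite V] {G : SimpleGraph V} {T : Set V}
    (hT : ∀ v ∈ T, ∀ x, ¬ G.Adj v x) : T.ncard ≤ oddComps G := by
  have hsupp : ∀ v ∈ T, (G.connectedComponentMk v).supp = {v} := fun v hv => by
    ext w
    rw [ConnectedComponent.mem_supp_iff, ConnectedComponent.eq, Set.mem_singleton_iff]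
    exact ⟨fun h => (eq_of_reachable_of_forall_not_adj (hT v hv) h.symm).symm,
      fun h => h ▸ Reachable.refl _⟩
  let f : T → {c : G.ConnectedComponent // Odd (Nat.card c.supp)} := fun v =>
    ⟨G.connectedComponentMk v, by rw [hsupp v v.2, Nat.card_coe_set_eq, ncard_singleton]; decide⟩
  have hf : f.Injective := fun v w h => Subtype.ext <| eq_of_reachable_of_forall_not_adj (hT v v.2)
    (ConnectedComponent.eq.mp (congrArg Subtype.val h))
  exact Nat.card_le_card_of_injective f hf

end SimpleGraph

/-- If `G` has a perfect matching, `S` and `S'` are disjoint,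
every neighbour of a vertex of `S` lies in `S'`, `|S'| ≤ |S| + 1`, and `S` is
independent, then `S'` is a barrier of `G`. -/
theorem stmt0 [Fintype V] (G : SimpleGraph V) (S S' : Set V)
    (hpm : HasPM G) (hdisj : Disjoint S S')
    (hN : Nbrs G S ⊆ S') (hcard : S'.ncard ≤ S.ncard + 1)
    (hind : ∀ u ∈ S, ∀ v ∈ S, ¬ G.Adj u v) :
    IsBarrier G S' := by
  obtain ⟨M, hM⟩ := hpm
  have hupper := oddComps_induce_compl_le_of_isPerfectMatching hM S'
  have hparity := even_oddComps_induce_compl_add_ncard (G := G)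
    (by simpa [Nat.card_eq_fintype_card] using hM.even_card) S'
  have hlower : S.ncard ≤ oddComps (G.induce S'ᶜ) := by
    have hS : S ⊆ Set.range ((↑) : ↥S'ᶜ → V) := by
      rw [Subtype.range_coe]
      exact hdisj.subset_compl_right
    rw [← ncard_preimage_of_injective_subset_range Subtype.val_injective hS]
    refine ncard_le_oddComps_of_forall_not_adj fun ⟨v, _⟩ hv ⟨x, hx⟩ hadj => ?_
    by_cases hxS : x ∈ S
    · exact hind v hv x hxS hadj
    · exact hx (hN ⟨hxS, v, hv, hadj⟩)
  rw [IsBarrier]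
  rcases hparity with ⟨k, hk⟩
  omega
end

section
/- Let H be a bipartite graph with bipartition (U, W), |U| = |W|, and at least four vertices. Then H is matching covered (connected and every edge lies in a perfect matching) if and only if |N(S)| ≥ |S| + 1 for every nonempty proper subset S of U. -/
open SimpleGraph Set

universe u
variable {V : Type u}

section Partner
variable {G : SimpleGraph V} {M : SimpleGraph.Subgraph G}

noncomputable def pmP (h : M.IsPerfectMatching) (v : V) : V :=
  (h.1 (h.2 v)).choose

lemma pmP_adj (h : M.IsPerfectMatching) (v : V) : M.Adj v (pmP h v) :=
  (h.1 (h.2 v)).choose_spec.1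

lemma pmP_eq (h : M.IsPerfectMatching) {v w : V} (hvw : M.Adj v w) : pmP h v = w :=
  ((h.1 (h.2 v)).choose_spec.2 w hvw).symm

lemma pmP_inj (h : M.IsPerfectMatching) : Function.Injective (pmP h) := by
  intro x y hxy
  have hx : pmP h (pmP h x) = x := pmP_eq h (pmP_adj h x).symm
  have hy : pmP h (pmP h x) = y := by rw [hxy]; exact pmP_eq h (pmP_adj h y).symm
  rw [← hx, hy]

end Partner

lemma hall_inj [Fintype V] (G : SimpleGraph V) (A B : Set V) (hd : Disjoint A B)
    (h : ∀ S : Set V, S ⊆ A → S.ncard ≤ (Nbrs G S ∩ B).ncard) :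
    ∃ f : ↥A → ↥B, Function.Injective f ∧ ∀ a : ↥A, G.Adj ↑a ↑(f a) := by
  classical
  rw [← Fintype.all_card_le_filter_rel_iff_exists_injective
    (fun (a : ↥A) (b : ↥B) => G.Adj ↑a ↑b)]
  intro s
  set S : Set V := (↑) '' (↑s : Set ↥A) with hS
  have hSA : S ⊆ A := by rintro _ ⟨a, _, rfl⟩; exact a.2
  have h1 : s.card = S.ncard := by
    rw [hS, Set.ncard_image_of_injective _ Subtype.val_injective, Set.ncard_coe_finset]
  have himg : ((↑) '' (↑({b : ↥B | ∃ a ∈ s, G.Adj ↑a ↑b} : Finset ↥B) : Set ↥B) : Set V)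
      = Nbrs G S ∩ B := by
    ext v
    simp only [Finset.coe_filter, Set.mem_image, Set.mem_setOf_eq]
    constructor
    · rintro ⟨b, ⟨-, a, ha, hadj⟩, rfl⟩
      refine ⟨⟨fun hvS => Set.disjoint_left.mp hd (hSA hvS) b.2, ↑a, ⟨a, ha, rfl⟩, hadj⟩, b.2⟩
    · rintro ⟨⟨hvS, u, ⟨a, ha, rfl⟩, hadj⟩, hvB⟩
      exact ⟨⟨v, hvB⟩, ⟨Finset.mem_univ _, a, ha, hadj⟩, rfl⟩
  have h2 : ({b : ↥B | ∃ a ∈ s, G.Adj ↑a ↑b} : Finset ↥B).card = (Nbrs G S ∩ B).ncard := by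
    rw [← himg, Set.ncard_image_of_injective _ Subtype.val_injective, Set.ncard_coe_finset]
  rw [h1, h2]
  exact h S hSA


/-- Hall-type characterization of bipartite matching covered
graphs. -/
theorem stmt5 [Fintype V] (H : SimpleGraph V) (U W : Set V)
    (hbip : IsBipartition H U W) (hUW : U.ncard = W.ncard)
    (hV : 4 ≤ Nat.card V) :
    MatchingCovered H ↔
      ∀ S : Set V, S ⊆ U → S.Nonempty → S ≠ U →
        S.ncard + 1 ≤ (Nbrs H S).ncard := by
  classical
  obtain ⟨hdisj, huniv, hbi⟩ := hbip
  have memUW : ∀ v : V, v ∈ U ∨ v ∈ W := by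
    intro v
    have : v ∈ U ∪ W := huniv.symm ▸ Set.mem_univ v
    exact this
  have adjUW : ∀ {a b : V}, H.Adj a b → a ∈ U → b ∈ W := by
    intro a b h ha
    rcases hbi a b h with ⟨_, h2⟩ | ⟨h1, _⟩
    · exact h2
    · exact (Set.disjoint_left.mp hdisj ha h1).elim
  have adjWU : ∀ {a b : V}, H.Adj a b → a ∈ W → b ∈ U := by
    intro a b h ha
    rcases hbi a b h with ⟨h1, _⟩ | ⟨_, h2⟩
    · exact (Set.disjoint_left.mp hdisj h1 ha).elim
    · exact h2
  have hWsub : ∀ {S : Set V}, S ⊆ U → Nbrs H S ⊆ W := by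
    intro S hSU v hv
    obtain ⟨hvS, u, huS, hadj⟩ := hv
    exact adjUW hadj (hSU huS)
  have hcardV : U.ncard + W.ncard = Nat.card V := by
    rw [← Set.ncard_univ, ← huniv, Set.ncard_union_eq hdisj]
  have hU2 : 2 ≤ U.ncard := by omega
  constructor
  · rintro ⟨hconn, -, hpm⟩ S hSU hSne hSneU
    obtain ⟨u₀, hu₀U, hu₀S⟩ : ∃ u, u ∈ U ∧ u ∉ S := by
      by_contra h'
      push_neg at h'
      exact hSneU (hSU.antisymm h')
    obtain ⟨s₀, hs₀⟩ := hSne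
    have hu₀X : u₀ ∉ S ∪ Nbrs H S := by
      rintro (h | h)
      · exact hu₀S h
      · exact Set.disjoint_left.mp hdisj hu₀U (hWsub hSU h)
    obtain ⟨d, -, hdf, hds⟩ := Walk.exists_boundary_dart (hconn s₀ u₀).some
      (S ∪ Nbrs H S) (Or.inl hs₀) hu₀X
    have hadj : H.Adj d.fst d.snd := d.adj
    have haN : d.fst ∈ Nbrs H S := by
      rcases hdf with h | h
      · exact absurd (Or.inr ⟨fun hbS => hds (Or.inl hbS), d.fst, h, hadj⟩) hds
      · exact h
    have haW : d.fst ∈ W := hWsub hSU haN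
    have hbU : d.snd ∈ U := adjWU hadj haW
    have hbS : d.snd ∉ S := fun h => hds (Or.inl h)
    obtain ⟨M, hM, heM⟩ := hpm s(d.fst, d.snd) ((H.mem_edgeSet).mpr hadj)
    have hMab : M.Adj d.fst d.snd := (SimpleGraph.Subgraph.mem_edgeSet).mp heM
    have hmaps : ∀ x ∈ S, pmP hM x ∈ Nbrs H S := by
      intro x hx
      have hadj' : H.Adj x (pmP hM x) := M.adj_sub (pmP_adj hM x)
      have hpW : pmP hM x ∈ W := adjUW hadj' (hSU hx)
      exact ⟨fun h => Set.disjoint_left.mp hdisj (hSU h) hpW, x, hx, hadj'⟩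
    by_contra hc
    push_neg at hc
    have hle : (Nbrs H S).ncard ≤ S.ncard := Nat.lt_succ_iff.mp hc
    have himg : pmP hM '' S = Nbrs H S := by
      apply Set.eq_of_subset_of_ncard_le
      · rintro _ ⟨x, hx, rfl⟩; exact hmaps x hx
      · rw [Set.ncard_image_of_injective _ (pmP_inj hM)]; exact hle
      · exact Set.toFinite _
    obtain ⟨s', hs'S, hs'⟩ := himg ▸ haN
    have h1 : pmP hM d.fst = s' := pmP_eq hM (by rw [← hs']; exact (pmP_adj hM s').symm)
    have h2 : pmP hM d.fst = d.snd := pmP_eq hM hMab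
    have : s' = d.snd := by rw [← h1, h2]
    exact hbS (this ▸ hs'S)
  · intro hH
    have hUne : U.Nonempty := Set.nonempty_of_ncard_ne_zero (by omega)
    obtain ⟨u₀, hu₀⟩ := hUne
    have hNfull : Nbrs H (U \ {u₀}) = W := by
      refine Set.eq_of_subset_of_ncard_le (hWsub Set.diff_subset) ?_ (Set.toFinite _)
      have h1 : (U \ {u₀}).ncard = U.ncard - 1 := Set.ncard_diff_singleton_of_mem hu₀
      have h2 := hH (U \ {u₀}) Set.diff_subset
        (Set.nonempty_of_ncard_ne_zero (by omega))
        (by intro h; exact (h.symm ▸ hu₀ : u₀ ∈ U \ {u₀}).2 rfl)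
      omega
    have hWadj : ∀ w ∈ W, ∃ u ∈ U, H.Adj u w := by
      intro w hw
      obtain ⟨-, u, hu, hadj⟩ := hNfull ▸ hw
      exact ⟨u, hu.1, hadj⟩
    have key : ∀ A B : Set V, A ⊆ U → B ⊆ W →
        (∀ S : Set V, S ⊆ A → S.ncard ≤ (Nbrs H S ∩ B).ncard) → A.ncard = B.ncard →
        ∃ M : H.Subgraph, M.verts = A ∪ B ∧ M.IsMatching := by
      intro A B hAU hBW hhall hcard
      have hdAB : Disjoint A B := hdisj.mono hAU hBW
      obtain ⟨f, hfi, hfadj⟩ := hall_inj H A B hdAB hhall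
      have hbij : Function.Bijective f := by
        refine (Fintype.bijective_iff_injective_and_card f).mpr ⟨hfi, ?_⟩
        rw [← Nat.card_eq_fintype_card, ← Nat.card_eq_fintype_card,
          Nat.card_coe_set_eq, Nat.card_coe_set_eq, hcard]
      exact Subgraph.IsMatching.exists_of_disjoint_sets_of_equiv hdAB
        (Equiv.ofBijective f hbij) hfadj
    have hNU : ∀ S : Set V, S ⊆ U → S.ncard ≤ (Nbrs H S ∩ W).ncard := by
      intro S hSU
      rcases S.eq_empty_or_nonempty with rfl | hSne
      · simp
      by_cases hSU' : S = U
      · subst hSU'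
        have hWN : W ⊆ Nbrs H S ∩ W := by
          intro w hw
          obtain ⟨u, huU, hadj⟩ := hWadj w hw
          exact ⟨⟨fun hwS => Set.disjoint_left.mp hdisj hwS hw, u, huU, hadj⟩, hw⟩
        have := Set.ncard_le_ncard hWN (Set.toFinite _)
        omega
      · have h1 := hH S hSU hSne hSU'
        have h2 : Nbrs H S ∩ W = Nbrs H S := Set.inter_eq_left.mpr (hWsub hSU)
        rw [h2]; omega
    obtain ⟨M₀, hM₀v, hM₀m⟩ := key U W subset_rfl subset_rfl hNU hUW
    have hM₀ : M₀.IsPerfectMatching := by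
      refine ⟨hM₀m, fun v => ?_⟩
      rw [hM₀v, huniv]; exact Set.mem_univ v
    have hVne : Nonempty V := by
      have : 0 < Nat.card V := by omega
      exact (Nat.card_pos_iff.mp this).1
    refine ⟨?_, ?_, ?_⟩
    · rw [connected_iff]
      refine ⟨?_, hVne⟩
      obtain ⟨v₀⟩ := hVne
      set X := {x | H.Reachable v₀ x} with hXdef
      have hv₀X : v₀ ∈ X := Reachable.refl v₀
      have hXadj : ∀ {x y : V}, x ∈ X → H.Adj x y → y ∈ X :=
        fun hx h => hx.trans h.reachable
      have hXuniv : X = Set.univ := by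
        set S := X ∩ U with hSdef
        by_cases hSU' : S = U
        · ext x
          simp only [Set.mem_univ, iff_true]
          rcases memUW x with hx | hx
          · exact (show x ∈ S from hSU'.symm ▸ hx).1
          · obtain ⟨u, huU, hadj⟩ := hWadj x hx
            exact hXadj (show u ∈ S from hSU'.symm ▸ huU).1 hadj
        · exfalso
          have hSne : S.Nonempty := by
            rcases memUW v₀ with h | h
            · exact ⟨v₀, hv₀X, h⟩
            · refine ⟨pmP hM₀ v₀, hXadj hv₀X (M₀.adj_sub (pmP_adj hM₀ v₀)), ?_⟩
              exact adjWU (M₀.adj_sub (pmP_adj hM₀ v₀)) h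
          have h1 := hH S Set.inter_subset_right hSne hSU'
          have hmUW : ∀ x ∈ S, pmP hM₀ x ∈ X ∩ W := by
            rintro x ⟨hx1, hx2⟩
            exact ⟨hXadj hx1 (M₀.adj_sub (pmP_adj hM₀ x)),
              adjUW (M₀.adj_sub (pmP_adj hM₀ x)) hx2⟩
          have hmWU : ∀ x ∈ X ∩ W, pmP hM₀ x ∈ X ∩ U := by
            rintro x ⟨hx1, hx2⟩
            exact ⟨hXadj hx1 (M₀.adj_sub (pmP_adj hM₀ x)),
              adjWU (M₀.adj_sub (pmP_adj hM₀ x)) hx2⟩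
          have hmWU' : ∀ x ∈ X ∩ W, pmP hM₀ x ∈ S := hmWU
          have hcardeq : S.ncard = (X ∩ W).ncard :=
            le_antisymm
              (Set.ncard_le_ncard_of_injOn _ hmUW (pmP_inj hM₀).injOn (Set.toFinite _))
              (Set.ncard_le_ncard_of_injOn _ hmWU' (pmP_inj hM₀).injOn (Set.toFinite _))
          have hNsub : Nbrs H S ⊆ X ∩ W := by
            rintro v ⟨hvS, u, ⟨huX, huU⟩, hadj⟩
            exact ⟨hXadj huX hadj, adjUW hadj huU⟩
          have := Set.ncard_le_ncard hNsub (Set.toFinite _)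
          omega
      intro a b
      have ha : a ∈ X := hXuniv.symm ▸ Set.mem_univ a
      have hb : b ∈ X := hXuniv.symm ▸ Set.mem_univ b
      exact (ha : H.Reachable v₀ a).symm.trans hb
    · have hWne : W.Nonempty := Set.nonempty_of_ncard_ne_zero (by omega)
      obtain ⟨w, hw⟩ := hWne
      obtain ⟨u, -, hadj⟩ := hWadj w hw
      exact ⟨s(u, w), (H.mem_edgeSet).mpr hadj⟩
    · have main : ∀ a b : V, H.Adj a b → a ∈ U → b ∈ W →
          ∃ M : H.Subgraph, M.IsPerfectMatching ∧ M.Adj a b := by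
        intro a b hab haU hbW
        set A := U \ {a} with hAdef
        set B := W \ {b} with hBdef
        have hhall : ∀ S : Set V, S ⊆ A → S.ncard ≤ (Nbrs H S ∩ B).ncard := by
          intro S hSA
          rcases S.eq_empty_or_nonempty with rfl | hSne
          · simp
          have hSU : S ⊆ U := hSA.trans Set.diff_subset
          have hSneqU : S ≠ U := fun h => (hSA (h ▸ haU)).2 rfl
          have h1 := hH S hSU hSne hSneqU
          have h2 : Nbrs H S ∩ B = Nbrs H S \ {b} := by
            ext v
            constructor
            · rintro ⟨hv, -, hvb⟩
              exact ⟨hv, hvb⟩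
            · rintro ⟨hv, hvb⟩
              exact ⟨hv, hWsub hSU hv, hvb⟩
          have h3 : Nbrs H S ⊆ (Nbrs H S \ {b}) ∪ {b} := by
            intro v hv
            by_cases hvb : v = b
            · exact Or.inr hvb
            · exact Or.inl ⟨hv, hvb⟩
          have h4 := Set.ncard_le_ncard h3 (Set.toFinite _)
          have h5 := Set.ncard_union_le (Nbrs H S \ {b}) {b}
          have h6 : ({b} : Set V).ncard = 1 := Set.ncard_singleton b
          rw [h2]
          omega
        have hcard : A.ncard = B.ncard := by
          rw [hAdef, hBdef, Set.ncard_diff_singleton_of_mem haU,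
            Set.ncard_diff_singleton_of_mem hbW, hUW]
        obtain ⟨M', hM'v, hM'm⟩ := key A B Set.diff_subset Set.diff_subset hhall hcard
        have haAB : a ∉ A ∪ B := by
          rintro (h | h)
          · exact h.2 rfl
          · exact Set.disjoint_left.mp hdisj haU h.1
        have hbAB : b ∉ A ∪ B := by
          rintro (h | h)
          · exact Set.disjoint_left.mp hdisj h.1 hbW
          · exact h.2 rfl
        have hd : Disjoint M'.support (H.subgraphOfAdj hab).support := by
          refine Set.disjoint_of_subset
            (M'.support_subset_verts.trans hM'v.le)
            ((H.subgraphOfAdj hab).support_subset_verts.trans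
              (by simp : (H.subgraphOfAdj hab).verts ⊆ ({a, b} : Set V))) ?_
          rw [Set.disjoint_right]
          rintro x (rfl | rfl)
          · exact haAB
          · exact hbAB
        have hM : (M' ⊔ H.subgraphOfAdj hab).IsPerfectMatching := by
          refine ⟨Subgraph.IsMatching.sup hM'm (Subgraph.IsMatching.subgraphOfAdj hab) hd, ?_⟩
          intro v
          rw [Subgraph.verts_sup, hM'v]
          rcases memUW v with h | h
          · by_cases hv : v = a
            · exact Or.inr (by simp [hv])
            · exact Or.inl (Or.inl ⟨h, hv⟩)
          · by_cases hv : v = b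
            · exact Or.inr (by simp [hv])
            · exact Or.inl (Or.inr ⟨h, hv⟩)
        exact ⟨M' ⊔ H.subgraphOfAdj hab, hM, Or.inr (by simp)⟩
      intro e he
      induction e with
      | _ x y =>
        have hadj : H.Adj x y := (H.mem_edgeSet).mp he
        rcases hbi x y hadj with ⟨hxU, hyW⟩ | ⟨hxW, hyU⟩
        · obtain ⟨M, hM, hMadj⟩ := main x y hadj hxU hyW
          exact ⟨M, hM, (Subgraph.mem_edgeSet).mpr hMadj⟩
        · obtain ⟨M, hM, hMadj⟩ := main y x hadj.symm hyU hxW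
          exact ⟨M, hM, by rw [Sym2.eq_swap]; exact (Subgraph.mem_edgeSet).mpr hMadj⟩
end

section
/- Let G be a brick with removable doubleton {e1, e2} and let H = G − {e1, e2} be bipartite with bipartition (U, W) where both ends of e1 lie in U and both ends of e2 lie in W. Let S be a subset of U containing at most one end of e1, and let S' be a set with N_G(S) ⊆ S' and |S'| ≥ 2. Then |S'| ≥ |S| + 2. -/
open SimpleGraph Set

universe u
variable {V : Type u}

/-- in a near-bipartite brick, if `S ⊆ U` contains at most one end
of `e₁` and `N_G(S) ⊆ S'` with `|S'| ≥ 2`, then `|S'| ≥ |S| + 2`. -/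
theorem stmt7 [Fintype V] (G : SimpleGraph V) (hG : IsBrick G)
    (a1 b1 a2 b2 : V) (he1 : G.Adj a1 b1) (he2 : G.Adj a2 b2)
    (hnee : s(a1, b1) ≠ s(a2, b2))
    (hnr1 : ¬ Removable G s(a1, b1)) (hnr2 : ¬ Removable G s(a2, b2))
    (hH : MatchingCovered (G.deleteEdges {s(a1, b1), s(a2, b2)}))
    (U W : Set V)
    (hbip : IsBipartition (G.deleteEdges {s(a1, b1), s(a2, b2)}) U W)
    (ha1 : a1 ∈ U) (hb1 : b1 ∈ U) (ha2 : a2 ∈ W) (hb2 : b2 ∈ W)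
    (S S' : Set V) (hSU : S ⊆ U) (hends : ¬ (a1 ∈ S ∧ b1 ∈ S))
    (hNS : Nbrs G S ⊆ S') (hS' : 2 ≤ S'.ncard) :
    S.ncard + 2 ≤ S'.ncard := by
  classical
  -- S is independent in G
  have hdisj := Set.disjoint_left.mp hbip.1
  have hSindep : ∀ u ∈ S, ∀ v ∈ S, ¬ G.Adj u v := by
    intro u hu v hv hadj
    by_cases h1 : s(u, v) = s(a1, b1)
    · rw [Sym2.eq_iff] at h1
      rcases h1 with ⟨rfl, rfl⟩ | ⟨rfl, rfl⟩
      · exact hends ⟨hu, hv⟩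
      · exact hends ⟨hv, hu⟩
    by_cases h2 : s(u, v) = s(a2, b2)
    · rw [Sym2.eq_iff] at h2
      have huW : u ∈ W := by rcases h2 with ⟨rfl, _⟩ | ⟨rfl, _⟩ <;> assumption
      exact hdisj (hSU hu) huW
    · have hHadj : (G.deleteEdges {s(a1, b1), s(a2, b2)}).Adj u v := by
        rw [SimpleGraph.deleteEdges_adj]
        refine ⟨hadj, ?_⟩
        simp only [Set.mem_insert_iff, Set.mem_singleton_iff]
        tauto
      rcases hbip.2.2 u v hHadj with ⟨_, hvW⟩ | ⟨huW, _⟩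
      · exact hdisj (hSU hv) hvW
      · exact hdisj (hSU hu) huW
  -- every G-neighbour of a vertex of S lies in Nbrs G S
  have hnbr : ∀ u ∈ S, ∀ v, G.Adj u v → v ∈ Nbrs G S := by
    intro u hu v hadj
    exact ⟨fun hvS => hSindep u hu v hvS hadj, u, hu, hadj⟩
  rcases S.eq_empty_or_nonempty with rfl | ⟨s₀, hs₀⟩
  · simp only [Set.ncard_empty, zero_add]
    exact hS'
  have hs₀n : s₀ ∈ (Nbrs G S)ᶜ := fun h => h.1 hs₀
  -- Nbrs G S has at least 2 elements, via 3-connectivity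
  have htwo : 1 < (Nbrs G S).ncard := by
    by_contra hlt
    push_neg at hlt
    have hcon := hG.1.2 (Nbrs G S) (by omega)
    have hcompl : (Nbrs G S).ncard + (Nbrs G S)ᶜ.ncard = Nat.card V :=
      Set.ncard_add_ncard_compl _
    have hV4 : 4 ≤ Nat.card V := hG.1.1
    have h2c : 1 < (Nbrs G S)ᶜ.ncard := by omega
    obtain ⟨v, hv, hvne⟩ := Set.exists_ne_of_one_lt_ncard h2c s₀
    obtain ⟨p⟩ := hcon.preconnected ⟨s₀, hs₀n⟩ ⟨v, hv⟩
    cases p with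
    | nil => exact hvne (by simp)
    | cons h q =>
      rename_i b
      have hadj' : G.Adj s₀ (b : V) := h
      exact b.2 (hnbr s₀ hs₀ _ hadj')
  obtain ⟨x, y, hx, hy, hxy⟩ := (Set.one_lt_ncard_iff (Set.toFinite _)).mp htwo
  -- perfect matching of G − {x, y}
  obtain ⟨M, hM⟩ := hG.2 x y hxy
  have hSin : ∀ u ∈ S, u ∈ ({x, y} : Set V)ᶜ := by
    intro u hu h
    rcases h with rfl | rfl
    · exact hx.1 hu
    · exact hy.1 hu
  have key : ∀ u, ∀ hu : u ∈ S, ∃ t : ↥(({x, y} : Set V)ᶜ),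
      M.Adj ⟨u, hSin u hu⟩ t :=
    fun u hu => (hM.1 (hM.2 ⟨u, hSin u hu⟩)).exists
  choose f hf using key
  set g : V → V := fun u => if h : u ∈ S then (f u h : V) else u with hg
  have hmaps : ∀ u ∈ S, g u ∈ Nbrs G S \ {x, y} := by
    intro u hu
    have hadjM := hf u hu
    have hadjG : G.Adj u ((f u hu : ↥(({x, y} : Set V)ᶜ)) : V) := M.adj_sub hadjM
    refine ⟨?_, ?_⟩
    · simp only [hg, dif_pos hu]
      exact hnbr u hu _ hadjG
    · simp only [hg, dif_pos hu]
      exact (f u hu).2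
  have hinj : Set.InjOn g S := by
    intro u1 h1 u2 h2 heq
    simp only [hg, dif_pos h1, dif_pos h2] at heq
    have heq' : f u1 h1 = f u2 h2 := Subtype.ext heq
    have hA1 : M.Adj (f u1 h1) ⟨u1, hSin u1 h1⟩ := (hf u1 h1).symm
    have hA2 : M.Adj (f u1 h1) ⟨u2, hSin u2 h2⟩ := by
      rw [heq']; exact (hf u2 h2).symm
    have hvert : (f u1 h1) ∈ M.verts := M.edge_vert hA1
    have := (hM.1 hvert).unique hA1 hA2
    exact congrArg Subtype.val this
  have hle : S.ncard ≤ (Nbrs G S \ {x, y}).ncard :=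
    Set.ncard_le_ncard_of_injOn g hmaps hinj (Set.toFinite _)
  have hsub : ({x, y} : Set V) ⊆ Nbrs G S := by
    intro z hz; rcases hz with rfl | rfl <;> assumption
  have hdiff : (Nbrs G S \ {x, y}).ncard + ({x, y} : Set V).ncard = (Nbrs G S).ncard :=
    Set.ncard_diff_add_ncard_of_subset hsub (Set.toFinite _)
  rw [Set.ncard_pair hxy] at hdiff
  have hfin : (Nbrs G S).ncard ≤ S'.ncard := Set.ncard_le_ncard hNS (Set.toFinite _)
  omega
end

section
/- Let G be a near-bipartite brick with removable doubleton {e1, e2}, and let H = G − {e1, e2}. Then every vertex of G is incident with at most one edge that is nonremovable in G but removable in H. -/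
open SimpleGraph Set

universe u
variable {V : Type u}

/-!
If `e` is not removable in `G`, some edge `f` of `G − e` lies in no perfect matching of `G − e`,
so every perfect matching of `G` through `f` uses `e`. When `G − e − S` is matching covered,
`f ∈ S`, because every other edge of `G − e` lies in a perfect matching of `G − e − S`.
With `e = e₂` and `S = {e₁}`, every perfect matching through `e₁` uses `e₂`; with `e` of type I
and `S = {e₁, e₂}`, every perfect matching through `e₁` and `e₂` uses `e`. As `G` is a brick,
some perfect matching `M` contains `e₁`, hence every type I edge, and at most one edge of `M`
meets a given vertex.
-/

namespace SimpleGraph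

variable {G G' : SimpleGraph V}

def DependsOn (G : SimpleGraph V) (f e : Sym2 V) : Prop :=
  ∀ M : G.Subgraph, M.IsPerfectMatching → f ∈ M.edgeSet → e ∈ M.edgeSet

lemma Subgraph.IsPerfectMatching.exists_of_spanningCoe_le {M : G.Subgraph}
    (hM : M.IsPerfectMatching) (h : M.spanningCoe ≤ G') :
    ∃ M' : G'.Subgraph, M'.IsPerfectMatching ∧ M'.edgeSet = M.edgeSet := by
  refine ⟨G'.toSubgraph _ h, (Subgraph.IsPerfectMatching.toSubgraph_iff h).2 hM, ?_⟩
  ext e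
  induction e using Sym2.ind
  rfl

lemma Subgraph.spanningCoe_le_deleteEdges {M : G.Subgraph} {s : Set (Sym2 V)}
    (h : Disjoint M.edgeSet s) : M.spanningCoe ≤ G.deleteEdges s := fun _ _ hxy =>
  SimpleGraph.deleteEdges_adj.2 ⟨M.adj_sub hxy, h.notMem_of_mem_left (Subgraph.mem_edgeSet.2 hxy)⟩

lemma Subgraph.IsMatching.subsingleton_incidentEdges {M : G.Subgraph} (hM : M.IsMatching)
    (v : V) : {e ∈ M.edgeSet | v ∈ e}.Subsingleton := by
  rintro e ⟨he, hve⟩ f ⟨hf, hvf⟩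
  obtain ⟨x, rfl⟩ := Sym2.mem_iff_exists.1 hve
  obtain ⟨y, rfl⟩ := Sym2.mem_iff_exists.1 hvf
  rw [hM.eq_of_adj_left (Subgraph.mem_edgeSet.1 he) (Subgraph.mem_edgeSet.1 hf)]

lemma exists_isPerfectMatching_mem_edgeSet_of_hasPM_induce {a b : V} (hab : G.Adj a b)
    (h : HasPM (G.induce ({a, b} : Set V)ᶜ)) :
    ∃ M : G.Subgraph, M.IsPerfectMatching ∧ s(a, b) ∈ M.edgeSet := by
  obtain ⟨N, hN⟩ := h
  set N' := N.map (Embedding.induce ({a, b} : Set V)ᶜ).toHom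
  have hN'verts : N'.verts = ({a, b} : Set V)ᶜ := by
    rw [Subgraph.map_verts, hN.2.verts_eq_univ, image_univ]
    exact Subtype.range_coe
  have hN' : N'.IsMatching := hN.1.map _ (Embedding.induce (G := G) _).injective
  have hab' := Subgraph.IsMatching.subgraphOfAdj hab
  refine ⟨N' ⊔ G.subgraphOfAdj hab, ⟨hN'.sup hab' ?_, fun v => ?_⟩, by simp⟩
  · rw [hN'.support_eq_verts, hab'.support_eq_verts, hN'verts, subgraphOfAdj_verts]
    exact disjoint_compl_left
  · by_cases hv : v ∈ ({a, b} : Set V)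
    · exact Or.inr (by simpa using hv)
    · exact Or.inl (hN'verts ▸ hv)

lemma exists_dependsOn_of_not_removable {s : Set (Sym2 V)} {e : Sym2 V} (he : e ∈ G.edgeSet)
    (hnr : ¬ Removable G e) (hmc : MatchingCovered (G.deleteEdges (s ∪ {e}))) :
    ∃ f ∈ s, G.DependsOn f e := by
  have hle : G.deleteEdges (s ∪ {e}) ≤ G.deleteEdges {e} := deleteEdges_anti subset_union_right
  have hnmc : ¬ MatchingCovered (G.deleteEdges {e}) := fun h => hnr ⟨he, h⟩
  simp only [MatchingCovered, not_and, not_forall, not_exists] at hnmc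
  obtain ⟨f, hf, hfM⟩ := hnmc (hmc.1.mono hle) (hmc.2.1.mono (edgeSet_mono hle))
  rw [edgeSet_deleteEdges, mem_sdiff, mem_singleton_iff] at hf
  by_cases hfs : f ∈ s
  · refine ⟨f, hfs, fun M hM hfM' => by_contra fun heM => ?_⟩
    obtain ⟨M', hM', hedges⟩ := hM.exists_of_spanningCoe_le
      (Subgraph.spanningCoe_le_deleteEdges (disjoint_singleton_right.2 heM))
    exact hfM M' hM' (hedges ▸ hfM')
  · obtain ⟨N, hN, hfN⟩ := hmc.2.2 f (by simp [hf.1, hf.2, hfs])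
    obtain ⟨N', hN', hedges⟩ := hN.exists_of_spanningCoe_le (N.spanningCoe_le.trans hle)
    exact (hfM N' hN' (hedges ▸ hfN)).elim

lemma mem_edgeSet_of_removable_deleteEdges {s : Set (Sym2 V)} {e : Sym2 V}
    (he : e ∈ G.edgeSet) (hnr : ¬ Removable G e) (hrem : Removable (G.deleteEdges s) e)
    {M : G.Subgraph} (hM : M.IsPerfectMatching) (hs : s ⊆ M.edgeSet) : e ∈ M.edgeSet := by
  obtain ⟨f, hf, hdep⟩ := exists_dependsOn_of_not_removable he hnr
    (deleteEdges_deleteEdges s {e} ▸ hrem.2)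
  exact hdep M hM (hs hf)

end SimpleGraph

theorem stmt9_general (G : SimpleGraph V) (hG : IsBrick G)
    (a1 b1 a2 b2 : V) (he1 : G.Adj a1 b1) (he2 : G.Adj a2 b2)
    (hnr2 : ¬ Removable G s(a2, b2))
    (hH : MatchingCovered (G.deleteEdges {s(a1, b1), s(a2, b2)})) :
    ∀ v : V,
      {e : Sym2 V | v ∈ e ∧ e ≠ s(a1, b1) ∧ e ≠ s(a2, b2) ∧ e ∈ G.edgeSet ∧
        ¬ Removable G e ∧
        Removable (G.deleteEdges {s(a1, b1), s(a2, b2)}) e}.ncard ≤ 1 := by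
  intro v
  obtain ⟨f, rfl, hdep⟩ := exists_dependsOn_of_not_removable (s := {s(a1, b1)})
    he2 hnr2 (by rwa [singleton_union])
  obtain ⟨M, hM, h1⟩ :=
    exists_isPerfectMatching_mem_edgeSet_of_hasPM_induce he1 (hG.2 a1 b1 he1.ne)
  have hpair : {s(a1, b1), s(a2, b2)} ⊆ M.edgeSet :=
    insert_subset h1 (singleton_subset_iff.2 (hdep M hM h1))
  have htypeI : {e : Sym2 V | v ∈ e ∧ e ≠ s(a1, b1) ∧ e ≠ s(a2, b2) ∧ e ∈ G.edgeSet ∧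
      ¬ Removable G e ∧ Removable (G.deleteEdges {s(a1, b1), s(a2, b2)}) e} ⊆
      {e ∈ M.edgeSet | v ∈ e} := fun e ⟨hv, _, _, heG, hnr, hrem⟩ =>
    ⟨mem_edgeSet_of_removable_deleteEdges heG hnr hrem hM hpair, hv⟩
  have hsub := (hM.1.subsingleton_incidentEdges v).anti htypeI
  exact (ncard_le_one hsub.finite).2 hsub

/-- every vertex of a near-bipartite brick is incident with at
most one nonremovable edge of type I. -/
theorem stmt9 [Fintype V] (G : SimpleGraph V) (hG : IsBrick G)
    (a1 b1 a2 b2 : V) (he1 : G.Adj a1 b1) (he2 : G.Adj a2 b2)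
    (hnee : s(a1, b1) ≠ s(a2, b2))
    (hnr1 : ¬ Removable G s(a1, b1)) (hnr2 : ¬ Removable G s(a2, b2))
    (hH : MatchingCovered (G.deleteEdges {s(a1, b1), s(a2, b2)}))
    (hbip : (G.deleteEdges {s(a1, b1), s(a2, b2)}).Colorable 2) :
    ∀ v : V,
      {e : Sym2 V | v ∈ e ∧ e ≠ s(a1, b1) ∧ e ≠ s(a2, b2) ∧ e ∈ G.edgeSet ∧
        ¬ Removable G e ∧
        Removable (G.deleteEdges {s(a1, b1), s(a2, b2)}) e}.ncard ≤ 1 :=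
  stmt9_general G hG a1 b1 a2 b2 he1 he2 hnr2 hH
end

section
/- Let H be a bipartite matching covered graph and u a vertex of H of degree at least three. If f1 and f2 are two edges incident with u that lie together in a common 4-cycle of H, then at least one of f1 and f2 is removable in H. -/
open SimpleGraph Set

universe u
variable {V : Type u}

/-
Let `(A, B)` be the bipartition with `u ∈ A`, and write `N(S)` for the neighbourhood of `S ⊆ A`.
Since `H` is matching covered, every nonempty `S ⊊ A` has `|N(S)| > |S|`.
If `ua` is not removable, then `H − ua` is still connected (through `u b z a`), so some edge
`cd` of `H − ua` lies in no perfect matching of `H − ua`, and Hall's theorem applied to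
`H − ua − c − d` yields a nonempty `S₁ ⊆ A − c` with `|N_{H−ua}(S₁)| ≤ |S₁| < |N_H(S₁)|`. The
only neighbour that can be lost is `a`, so `u ∈ S₁`, `u` is the only neighbour of `a` in `S₁`,
and `|N_H(S₁)| ≤ |S₁| + 1`. Doing the same for `ub` gives `S₂`. As `z ∉ S₁ ∪ S₂`, the union has
positive surplus, and submodularity of `|N(·)|` gives `|N(S₁ ∩ S₂)| ≤ |S₁ ∩ S₂| + 1`. But a
perfect matching through a third edge at `u` maps `S₁ ∩ S₂` injectively into
`N(S₁ ∩ S₂) − {a, b}`.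
-/

open Function

theorem Set.exists_injOn_mem_of_forall_ncard_le {α : Type*} [Finite α] {A : Set α}
    (t : α → Set α) (h : ∀ X ⊆ A, X.ncard ≤ (⋃ x ∈ X, t x).ncard) :
    ∃ f : α → α, InjOn f A ∧ ∀ x ∈ A, f x ∈ t x := by
  classical
  have := Fintype.ofFinite α
  obtain ⟨g, hg, hgt⟩ := Finset.all_card_le_biUnion_card_iff_exists_injective
      (fun x : A => (t x).toFinset) |>.mp fun s => by
    have := h (s.image Subtype.val) (by simp)
    rw [Set.ncard_coe_finset, Finset.card_image_of_injective _ Subtype.val_injective] at this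
    simpa [← Set.ncard_coe_finset] using this
  refine ⟨fun x => if hx : x ∈ A then g ⟨x, hx⟩ else x, fun x hx y hy hxy => ?_,
    fun x hx => ?_⟩
  · exact congrArg Subtype.val (hg (by simpa [hx, hy] using hxy))
  · simpa [hx] using hgt ⟨x, hx⟩

namespace SimpleGraph

variable {G : SimpleGraph V}

def nbhd (G : SimpleGraph V) (S : Set V) : Set V := {v | ∃ x ∈ S, G.Adj x v}

lemma nbhd_mono {S T : Set V} (h : S ⊆ T) : G.nbhd S ⊆ G.nbhd T :=
  fun _ ⟨x, hx, hxv⟩ => ⟨x, h hx, hxv⟩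

lemma nbhd_union (S T : Set V) : G.nbhd (S ∪ T) = G.nbhd S ∪ G.nbhd T := by
  ext v
  simp only [nbhd, mem_union, mem_ofPred_eq, or_and_right, exists_or]

lemma nbhd_inter_subset (S T : Set V) : G.nbhd (S ∩ T) ⊆ G.nbhd S ∩ G.nbhd T :=
  subset_inter (nbhd_mono inter_subset_left) (nbhd_mono inter_subset_right)

lemma IsBipartiteWith.nbhd_subset {A B S : Set V} (hG : G.IsBipartiteWith A B) (hS : S ⊆ A) :
    G.nbhd S ⊆ B :=
  fun _ ⟨_, hx, hxv⟩ => hG.mem_of_mem_adj (hS hx) hxv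

lemma ncard_nbhd_inter_le [Finite V] {S T : Set V} (hS : (G.nbhd S).ncard ≤ S.ncard + 1)
    (hT : (G.nbhd T).ncard ≤ T.ncard + 1) (hST : (S ∪ T).ncard < (G.nbhd (S ∪ T)).ncard) :
    (G.nbhd (S ∩ T)).ncard ≤ (S ∩ T).ncard + 1 := by
  have h₁ := ncard_union_add_ncard_inter S T
  have h₂ := ncard_union_add_ncard_inter (G.nbhd S) (G.nbhd T)
  have h₃ := ncard_le_ncard (nbhd_inter_subset (G := G) S T)
  rw [nbhd_union] at hST
  omega

lemma nbhd_subset_insert_nbhd_deleteEdges {S : Set V} {u a : V} (ha : a ∉ S) :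
    G.nbhd S ⊆ insert a ((G.deleteEdges {s(u, a)}).nbhd S) := by
  rintro v ⟨x, hx, hxv⟩
  by_cases he : s(x, v) = s(u, a)
  · rcases Sym2.eq_iff.mp he with ⟨-, rfl⟩ | ⟨rfl, -⟩
    · exact mem_insert _ _
    · exact absurd hx ha
  · exact mem_insert_of_mem _ ⟨x, hx, by simp [hxv, he]⟩

lemma eq_of_mem_nbhd_of_notMem_nbhd_deleteEdges {S : Set V} {u a v : V} (ha : a ∉ S)
    (hv : v ∈ G.nbhd S) (hv' : v ∉ (G.deleteEdges {s(u, a)}).nbhd S) :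
    u ∈ S ∧ v = a ∧ ∀ x ∈ S, G.Adj x a → x = u := by
  obtain ⟨x, hx, hxv⟩ := hv
  have hdel : ∀ y ∈ S, G.Adj y v → s(y, v) = s(u, a) := fun y hy hyv => by
    by_contra he
    exact hv' ⟨y, hy, by simp [hyv, he]⟩
  rcases Sym2.eq_iff.mp (hdel x hx hxv) with ⟨rfl, rfl⟩ | ⟨rfl, -⟩
  · exact ⟨hx, rfl, fun y hy hya => Sym2.congr_left.mp (hdel y hy hya)⟩
  · exact absurd hx ha

lemma reachable_deleteEdges_of_adj {u a b z : V} (hub : G.Adj u b) (hbz : G.Adj b z)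
    (hza : G.Adj z a) (hab : a ≠ b) (hzu : z ≠ u) :
    (G.deleteEdges {s(u, a)}).Reachable u a := by
  have e₁ : (G.deleteEdges {s(u, a)}).Adj u b := by simp [hub, hab.symm, hub.ne.symm]
  have e₂ : (G.deleteEdges {s(u, a)}).Adj b z := by simp [hbz, hub.ne.symm, hab.symm]
  have e₃ : (G.deleteEdges {s(u, a)}).Adj z a := by simp [hza, hzu, hza.ne]
  exact e₁.reachable.trans (e₂.reachable.trans e₃.reachable)

lemma Preconnected.mem_of_forall_adj_mem (hG : G.Preconnected) {C : Set V}
    (hC : ∀ v ∈ C, ∀ w, G.Adj v w → w ∈ C) {v w : V} (hv : v ∈ C) : w ∈ C := by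
  obtain ⟨p⟩ := hG v w
  induction p with
  | nil => exact hv
  | cons h _ ih => exact ih (hC _ hv _ h)

lemma exists_adj_ne_ne_of_three_le_degree {u : V} [Fintype (G.neighborSet u)]
    (h : 3 ≤ G.degree u) (a b : V) : ∃ c, G.Adj u c ∧ c ≠ a ∧ c ≠ b := by
  classical
  obtain ⟨c, hc, hcab⟩ := Finset.exists_mem_notMem_of_card_lt_card (s := {a, b})
    (t := G.neighborFinset u) (Finset.card_le_two.trans_lt (by rwa [card_neighborFinset_eq_degree]))
  simp only [Finset.mem_insert, Finset.mem_singleton, not_or] at hcab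
  exact ⟨c, (G.mem_neighborFinset u c).mp hc, hcab⟩

namespace Subgraph.IsPerfectMatching

variable {M : G.Subgraph}

noncomputable def mate (hM : M.IsPerfectMatching) (v : V) : V :=
  (isPerfectMatching_iff.mp hM v).choose

lemma adj_mate (hM : M.IsPerfectMatching) (v : V) : M.Adj v (hM.mate v) :=
  (isPerfectMatching_iff.mp hM v).choose_spec.1

lemma mate_eq_of_adj (hM : M.IsPerfectMatching) {v w : V} (h : M.Adj v w) : hM.mate v = w :=
  ((isPerfectMatching_iff.mp hM v).choose_spec.2 w h).symm

lemma mate_involutive (hM : M.IsPerfectMatching) : Involutive hM.mate :=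
  fun v => hM.mate_eq_of_adj (hM.adj_mate v).symm

lemma ncard_le_ncard_of_isBipartiteWith [Finite V] (hM : M.IsPerfectMatching) {A B : Set V}
    (hG : G.IsBipartiteWith A B) : A.ncard ≤ B.ncard :=
  ncard_le_ncard_of_injOn hM.mate (fun x hx => hG.mem_of_mem_adj hx (hM.adj_mate x).adj_sub)
    hM.mate_involutive.injective.injOn

lemma ncard_add_two_le_ncard_nbhd [Finite V] (hM : M.IsPerfectMatching) {S : Set V} {u a b : V}
    (hu : u ∈ S) (ha : G.Adj u a) (hb : G.Adj u b) (hab : a ≠ b) (hMa : ¬ M.Adj u a)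
    (hMb : ¬ M.Adj u b) (hSa : ∀ x ∈ S, G.Adj x a → x = u)
    (hSb : ∀ x ∈ S, G.Adj x b → x = u) :
    S.ncard + 2 ≤ (G.nbhd S).ncard := by
  have hmaps : ∀ x ∈ S, hM.mate x ∈ G.nbhd S \ {a, b} := by
    intro x hx
    have hx' := hM.adj_mate x
    refine ⟨⟨x, hx, hx'.adj_sub⟩, ?_⟩
    rintro (h | h)
    · obtain rfl := hSa x hx (h ▸ hx'.adj_sub)
      exact hMa (h ▸ hx')
    · obtain rfl := hSb x hx (h ▸ hx'.adj_sub)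
      exact hMb (h ▸ hx')
  have hab_sub : {a, b} ⊆ G.nbhd S :=
    insert_subset ⟨u, hu, ha⟩ (singleton_subset_iff.mpr ⟨u, hu, hb⟩)
  have h₁ := ncard_le_ncard_of_injOn hM.mate hmaps hM.mate_involutive.injective.injOn
  have h₂ := ncard_le_ncard hab_sub
  rw [ncard_sdiff hab_sub, ncard_pair hab] at h₁
  rw [ncard_pair hab] at h₂
  omega

end Subgraph.IsPerfectMatching

lemma exists_isPerfectMatching_of_bijOn {A B : Set V} {f : V → V} (hdisj : Disjoint A B)
    (hcov : A ∪ B = univ) (hf : BijOn f A B) (hadj : ∀ x ∈ A, G.Adj x (f x)) :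
    ∃ M : G.Subgraph, M.IsPerfectMatching ∧ ∀ x ∈ A, M.Adj x (f x) := by
  let K : SimpleGraph V := fromRel fun v w => v ∈ A ∧ w = f v
  have hK : K ≤ G := by
    rintro v w ⟨-, ⟨hv, rfl⟩ | ⟨hw, rfl⟩⟩
    · exact hadj v hv
    · exact (hadj w hw).symm
  have hne : ∀ x ∈ A, x ≠ f x :=
    fun x hx h => hdisj.notMem_of_mem_left hx (h ▸ hf.mapsTo hx)
  have hKA : ∀ x ∈ A, K.Adj x (f x) := fun x hx => ⟨hne x hx, Or.inl ⟨hx, rfl⟩⟩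
  refine ⟨G.toSubgraph K hK, Subgraph.isPerfectMatching_iff.mpr fun v => ?_, hKA⟩
  rcases (hcov ▸ mem_univ v : v ∈ A ∪ B) with hv | hv
  · refine ⟨f v, hKA v hv, ?_⟩
    rintro w ⟨-, ⟨-, rfl⟩ | ⟨hw, rfl⟩⟩
    · rfl
    · exact absurd (hf.mapsTo hw) (hdisj.notMem_of_mem_left hv)
  · obtain ⟨x, hx, rfl⟩ := hf.surjOn hv
    refine ⟨x, (hKA x hx).symm, ?_⟩
    rintro w ⟨-, ⟨hxA, -⟩ | ⟨hw, hwx⟩⟩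
    · exact absurd (hf.mapsTo hx) (hdisj.notMem_of_mem_left hxA)
    · exact hf.injOn hw hx hwx.symm

lemma IsBipartiteWith.exists_isPerfectMatching_adj [Finite V] {A B : Set V}
    (hG : G.IsBipartiteWith A B) (hcov : A ∪ B = univ) (hcard : B.ncard ≤ A.ncard) {c d : V}
    (hc : c ∈ A) (hcd : G.Adj c d)
    (hsurp : ∀ X ⊆ A, c ∉ X → X.Nonempty → X.ncard < (G.nbhd X).ncard) :
    ∃ M : G.Subgraph, M.IsPerfectMatching ∧ M.Adj c d := by
  classical
  -- Hall's condition for `c ↦ {d}` and `x ↦ N(x)` otherwise;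
  -- injectivity then keeps `d` away from every `x ≠ c`.
  let t : V → Set V := fun x => if x = c then {d} else G.neighborSet x
  have hall : ∀ X ⊆ A, X.ncard ≤ (⋃ x ∈ X, t x).ncard := by
    intro X hX
    have hsub : G.nbhd (X \ {c}) ⊆ ⋃ x ∈ X, t x := by
      rintro v ⟨x, ⟨hx, hxc⟩, hxv⟩
      exact mem_biUnion hx (by simpa [t, show x ≠ c from hxc] using hxv)
    have hX' : X.ncard ≤ (X \ {c}).ncard + 1 := by
      simpa using ncard_le_ncard_sdiff_add_ncard X {c}
    rcases (X \ {c}).eq_empty_or_nonempty with hY | hY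
    · rcases X.eq_empty_or_nonempty with rfl | ⟨x, hx⟩
      · simp
      · have hxc : x = c := by_contra fun h => hY.subset ⟨hx, h⟩
        have hd : d ∈ ⋃ x ∈ X, t x := mem_biUnion hx (by simp [t, hxc])
        rw [hY, ncard_empty] at hX'
        exact hX'.trans ((ncard_pos).mpr ⟨d, hd⟩)
    · calc X.ncard ≤ (X \ {c}).ncard + 1 := hX'
        _ ≤ (G.nbhd (X \ {c})).ncard :=
          hsurp _ (sdiff_subset.trans hX) (fun h => h.2 rfl) hY
        _ ≤ _ := ncard_le_ncard hsub
  obtain ⟨f, hinj, hft⟩ := exists_injOn_mem_of_forall_ncard_le t hall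
  have hfc : f c = d := by simpa [t] using hft c hc
  have hfadj : ∀ x ∈ A, G.Adj x (f x) := by
    intro x hx
    by_cases hxc : x = c
    · subst hxc; rwa [hfc]
    · simpa [t, hxc] using hft x hx
  have hmaps : MapsTo f A B := fun x hx => hG.mem_of_mem_adj hx (hfadj x hx)
  have himage : f '' A = B := eq_of_subset_of_ncard_le hmaps.image_subset
    (by rwa [hinj.ncard_image])
  obtain ⟨M, hM, hMadj⟩ := exists_isPerfectMatching_of_bijOn hG.disjoint hcov
    ⟨hmaps, hinj, himage.symm.subset⟩ hfadj
  exact ⟨M, hM, hfc ▸ hMadj c hc⟩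

end SimpleGraph

namespace MatchingCovered

variable {G : SimpleGraph V}

lemma exists_isPerfectMatching (hmc : MatchingCovered G) :
    ∃ M : G.Subgraph, M.IsPerfectMatching := by
  obtain ⟨e, he⟩ := hmc.2.1
  obtain ⟨M, hM, -⟩ := hmc.2.2 e he
  exact ⟨M, hM⟩

lemma ncard_lt_ncard_nbhd [Finite V] (hmc : MatchingCovered G) {A B : Set V}
    (hG : G.IsBipartiteWith A B) {S : Set V} (hSA : S ⊆ A) (hS : S.Nonempty) {w : V}
    (hw : w ∈ A) (hwS : w ∉ S) : S.ncard < (G.nbhd S).ncard := by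
  by_contra! hle
  -- Then every perfect matching matches `N(S)` into `S`, so no edge leaves `S ∪ N(S)`.
  have hback : ∀ (M : G.Subgraph) (hM : M.IsPerfectMatching), ∀ t ∈ G.nbhd S,
      hM.mate t ∈ S := by
    intro M hM t ht
    have himage : hM.mate '' S = G.nbhd S := eq_of_subset_of_ncard_le
      (by rintro _ ⟨x, hx, rfl⟩; exact ⟨x, hx, (hM.adj_mate x).adj_sub⟩)
      (by rwa [ncard_image_of_injective _ hM.mate_involutive.injective])
    obtain ⟨x, hx, rfl⟩ := himage ▸ ht
    rwa [hM.mate_involutive]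
  have hclosed : ∀ v ∈ S ∪ G.nbhd S, ∀ x, G.Adj v x → x ∈ S ∪ G.nbhd S := by
    rintro v (hv | hv) x hvx
    · exact Or.inr ⟨v, hv, hvx⟩
    · obtain ⟨M, hM, hvxM⟩ := hmc.2.2 s(v, x) hvx
      exact Or.inl (hM.mate_eq_of_adj (v := v) (w := x) hvxM ▸ hback M hM v hv)
  obtain ⟨s, hs⟩ := hS
  rcases hmc.1.preconnected.mem_of_forall_adj_mem hclosed (Or.inl hs) (w := w) with hwS' | hwN
  · exact hwS hwS'
  · exact hG.disjoint.notMem_of_mem_left hw (hG.nbhd_subset hSA hwN)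

lemma exists_tight_of_not_removable [Finite V] (hmc : MatchingCovered G) {A B : Set V}
    (hG : G.IsBipartiteWith A B) (hcov : A ∪ B = univ) {u a : V} (hu : u ∈ A) (hua : G.Adj u a)
    (hr : (G.deleteEdges {s(u, a)}).Reachable u a) (hnr : ¬ Removable G s(u, a)) :
    ∃ S ⊆ A, u ∈ S ∧ (G.nbhd S).ncard ≤ S.ncard + 1 ∧
      ∀ x ∈ S, G.Adj x a → x = u := by
  set G' := G.deleteEdges {s(u, a)}
  have hG' : G'.IsBipartiteWith A B := ⟨hG.disjoint, fun _ _ h => hG.mem_of_adj h.1⟩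
  have hedge : G'.edgeSet.Nonempty := by
    obtain ⟨p⟩ := hr
    cases p with
    | nil => exact absurd rfl hua.ne
    | cons h _ => exact ⟨s(u, _), h⟩
  obtain ⟨e, he, hno⟩ : ∃ e ∈ G'.edgeSet,
      ∀ M : G'.Subgraph, M.IsPerfectMatching → e ∉ M.edgeSet := by
    by_contra! h
    exact hnr ⟨hua, hmc.1.connected_delete_edge_of_not_isBridge (fun hb => hb hr), hedge, h⟩
  obtain ⟨c, d, hcd, hc, hno'⟩ : ∃ c d, G'.Adj c d ∧ c ∈ A ∧
      ∀ M : G'.Subgraph, M.IsPerfectMatching → ¬ M.Adj c d := by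
    induction e using Sym2.ind with
    | h x y =>
      rcases hG'.mem_of_adj he with ⟨hx, -⟩ | ⟨-, hy⟩
      · exact ⟨x, y, he, hx, hno⟩
      · exact ⟨y, x, he.symm, hy, fun M hM h => hno M hM h.symm⟩
  obtain ⟨M₀, hM₀⟩ := hmc.exists_isPerfectMatching
  obtain ⟨X, hXA, hcX, hX, hXle⟩ :
      ∃ X ⊆ A, c ∉ X ∧ X.Nonempty ∧ (G'.nbhd X).ncard ≤ X.ncard := by
    by_contra! h
    obtain ⟨M, hM, hMcd⟩ := hG'.exists_isPerfectMatching_adj hcov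
      (hM₀.ncard_le_ncard_of_isBipartiteWith hG.symm) hc hcd h
    exact hno' M hM hMcd
  have haX : a ∉ X := fun h => hG.disjoint.notMem_of_mem_left (hXA h) (hG.mem_of_mem_adj hu hua)
  obtain ⟨v, hv, hv'⟩ :=
    exists_mem_notMem_of_ncard_lt_ncard (hXle.trans_lt (hmc.ncard_lt_ncard_nbhd hG hXA hX hc hcX))
  obtain ⟨huX, rfl, huniq⟩ := eq_of_mem_nbhd_of_notMem_nbhd_deleteEdges haX hv hv'
  refine ⟨X, hXA, huX, ?_, huniq⟩
  calc (G.nbhd X).ncard ≤ (insert v (G'.nbhd X)).ncard :=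
        ncard_le_ncard (nbhd_subset_insert_nbhd_deleteEdges haX)
    _ ≤ (G'.nbhd X).ncard + 1 := ncard_insert_le _ _
    _ ≤ X.ncard + 1 := by omega

lemma removable_or_removable [Finite V] (hmc : MatchingCovered G) {A B : Set V}
    (hG : G.IsBipartiteWith A B) (hcov : A ∪ B = univ) {u a b z : V} [Fintype (G.neighborSet u)]
    (hu : u ∈ A) (hdeg : 3 ≤ G.degree u) (ha : G.Adj u a) (hb : G.Adj u b) (hab : a ≠ b)
    (hz : z ≠ u) (hza : G.Adj a z) (hzb : G.Adj b z) :
    Removable G s(u, a) ∨ Removable G s(u, b) := by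
  by_contra! h
  obtain ⟨hna, hnb⟩ := h
  obtain ⟨S₁, hS₁A, huS₁, hS₁, ha₁⟩ := hmc.exists_tight_of_not_removable hG hcov hu ha
    (reachable_deleteEdges_of_adj hb hzb hza.symm hab hz) hna
  obtain ⟨S₂, hS₂A, huS₂, hS₂, hb₂⟩ := hmc.exists_tight_of_not_removable hG hcov hu hb
    (reachable_deleteEdges_of_adj ha hza hzb.symm hab.symm hz) hnb
  have hzA : z ∈ A := hG.symm.mem_of_mem_adj (hG.mem_of_mem_adj hu ha) hza
  have hzS : z ∉ S₁ ∪ S₂ := by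
    rintro (h | h)
    exacts [hz (ha₁ z h hza.symm), hz (hb₂ z h hzb.symm)]
  have hI := ncard_nbhd_inter_le hS₁ hS₂
    (hmc.ncard_lt_ncard_nbhd hG (union_subset hS₁A hS₂A) ⟨u, Or.inl huS₁⟩ hzA hzS)
  obtain ⟨c, hc, hca, hcb⟩ := exists_adj_ne_ne_of_three_le_degree hdeg a b
  obtain ⟨M, hM, hMc⟩ := hmc.2.2 s(u, c) hc
  have hI' := hM.ncard_add_two_le_ncard_nbhd (S := S₁ ∩ S₂) ⟨huS₁, huS₂⟩ ha hb hab
    (fun h => hca (hM.1.eq_of_adj_left h hMc).symm) (fun h => hcb (hM.1.eq_of_adj_left h hMc).symm)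
    (fun x hx => ha₁ x hx.1) (fun x hx => hb₂ x hx.2)
  omega

end MatchingCovered

theorem stmt11_general [Fintype V] (H : SimpleGraph V)
    [DecidableRel H.Adj] (U W : Set V)
    (hbip : IsBipartition H U W) (hmc : MatchingCovered H)
    (u a b : V) (hdeg : 3 ≤ H.degree u)
    (ha : H.Adj u a) (hb : H.Adj u b) (hab : a ≠ b)
    (z : V) (hz : z ≠ u) (hza : H.Adj a z) (hzb : H.Adj b z) :
    Removable H s(u, a) ∨ Removable H s(u, b) := by
  obtain ⟨hdisj, hcov, hadj⟩ := hbip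
  have hG : H.IsBipartiteWith U W := ⟨hdisj, fun v w h => hadj v w h⟩
  rcases hadj u a ha with ⟨hu, -⟩ | ⟨hu, -⟩
  · exact hmc.removable_or_removable hG hcov hu hdeg ha hb hab hz hza hzb
  · exact hmc.removable_or_removable hG.symm (union_comm U W ▸ hcov) hu hdeg ha hb hab hz hza hzb

/-- two edges at a vertex of degree at least three lying in a
common 4-cycle of a bipartite matching covered graph cannot both be
nonremovable. -/
theorem stmt11 [Fintype V] [DecidableEq V] (H : SimpleGraph V)
    [DecidableRel H.Adj] (U W : Set V)
    (hbip : IsBipartition H U W) (hmc : MatchingCovered H)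
    (u a b : V) (hdeg : 3 ≤ H.degree u)
    (ha : H.Adj u a) (hb : H.Adj u b) (hab : a ≠ b)
    (z : V) (hz : z ≠ u) (hza : H.Adj a z) (hzb : H.Adj b z) :
    Removable H s(u, a) ∨ Removable H s(u, b) :=
  stmt11_general H U W hbip hmc u a b hdeg ha hb hab z hz hza hzb
end

section
/- Let G be a 3-connected cubic nonbipartite graph. If G has two edges e1 and e2 such that G − {e1, e2} is bipartite, then G is matching covered and {e1, e2} is a removable doubleton of G, i.e., neither e1 nor e2 is removable but G − {e1, e2} is matching covered. -/
/-!
Colour `G - e₁ - e₂` with sides `U` and `Uᶜ`. Summing the degrees of this graph over each side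
gives `3 |U| - k = 3 |Uᶜ| - (4 - k)`, where `k` counts the ends of `e₁, e₂` in `U`; hence `k = 2`.
As `G` itself is not bipartite, one of the edges, say `e₁`, lies inside `U` and the other inside
`Uᶜ`, and `|U| = |Uᶜ|`.

A cubic graph that stays connected after deleting any two vertices sends at least three edges out
of every nonempty proper vertex set. For `A ⊆ U` with neighbourhood `N` in `G - e₁ - e₂`, an edge
leaving `A ∪ N` is `e₁`, `e₂`, or one of the `3 |N| - 3 |A|` edges from `N` to `U \ A` (up to a
correction by the ends of `e₁, e₂` in `A` and `N`). Hence `|N| > |A|` when `∅ ≠ A ≠ U`, and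
`|N \ e₂| ≥ |A|` when `A` avoids `e₁`: these are the Hall conditions for a perfect matching of
`G - e₁ - e₂` through any of its edges and for a perfect matching of `G` through both `e₁` and
`e₂`. The same bound shows that `G - e₁ - e₂` is connected. Conversely, a perfect matching of `G`
through `e₁` but not `e₂` would match `Uᶜ` injectively into `U` minus the ends of `e₁`, which
`|U| = |Uᶜ|` forbids; so neither edge is removable.
-/

open SimpleGraph Set

universe u
variable {V : Type u}

namespace SimpleGraph

open Finset

variable {G : SimpleGraph V} {a₁ b₁ a₂ b₂ : V}

lemma Subgraph.IsMatching.sup_subgraphOfAdj {M : G.Subgraph} (hM : M.IsMatching) {x y : V}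
    (hxy : G.Adj x y) (hx : x ∉ M.verts) (hy : y ∉ M.verts) :
    (M ⊔ G.subgraphOfAdj hxy).IsMatching := by
  refine hM.sup (.subgraphOfAdj hxy) ?_
  rw [hM.support_eq_verts, support_subgraphOfAdj, Set.disjoint_insert_right,
    Set.disjoint_singleton_right]
  exact ⟨hx, hy⟩

lemma Subgraph.IsPerfectMatching.exists_map_of_le {G' : SimpleGraph V} (hle : G' ≤ G)
    {M : G'.Subgraph} (hM : M.IsPerfectMatching) {e : Sym2 V} (he : e ∈ M.edgeSet) :
    ∃ M' : G.Subgraph, M'.IsPerfectMatching ∧ e ∈ M'.edgeSet ∧ M'.edgeSet ⊆ G'.edgeSet := by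
  refine ⟨M.map (Hom.ofLE hle), ⟨hM.1.map_ofLE hle, fun v => ⟨v, hM.2 v, rfl⟩⟩, ?_, ?_⟩
  · simpa [Subgraph.edgeSet_map] using he
  · simpa [Subgraph.edgeSet_map] using M.edgeSet_subset

lemma IsBipartiteWith.of_deleteEdges_pair {s t : Set V}
    (h : (G.deleteEdges {s(a₁, b₁), s(a₂, b₂)}).IsBipartiteWith s t)
    (h₁ : a₁ ∈ s ∧ b₁ ∈ t ∨ a₁ ∈ t ∧ b₁ ∈ s) (h₂ : a₂ ∈ s ∧ b₂ ∈ t ∨ a₂ ∈ t ∧ b₂ ∈ s) :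
    G.IsBipartiteWith s t := by
  refine ⟨h.disjoint, fun x y hxy => ?_⟩
  by_cases he₁ : s(x, y) = s(a₁, b₁)
  · rcases Sym2.eq_iff.mp he₁ with ⟨rfl, rfl⟩ | ⟨rfl, rfl⟩ <;> tauto
  by_cases he₂ : s(x, y) = s(a₂, b₂)
  · rcases Sym2.eq_iff.mp he₂ with ⟨rfl, rfl⟩ | ⟨rfl, rfl⟩ <;> tauto
  exact h.mem_of_adj (by simp [hxy, he₁, he₂])

lemma card_interedges_eq_sum [DecidableRel G.Adj] (X Y : Finset V) :
    #(G.interedges X Y) = ∑ x ∈ X, #{y ∈ Y | G.Adj x y} := by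
  simp only [interedges_def, card_filter, sum_product]

def neighborhood (G : SimpleGraph V) [Fintype V] [DecidableRel G.Adj] (A : Finset V) :
    Finset V :=
  {y | ∃ a ∈ A, G.Adj a y}

lemma mem_neighborhood [Fintype V] [DecidableRel G.Adj] {A : Finset V} {y : V} :
    y ∈ G.neighborhood A ↔ ∃ a ∈ A, G.Adj a y := by
  simp [neighborhood]

variable [Fintype V] [DecidableEq V]

lemma exists_isBipartiteWith_compl (h : G.Colorable 2) :
    ∃ U : Finset V, G.IsBipartiteWith ↑U ↑Uᶜ := by
  obtain ⟨c⟩ := h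
  refine ⟨({v | c v = 0} : Finset V), ⟨by rw [coe_compl]; exact disjoint_compl_right,
    fun x y hxy => ?_⟩⟩
  have := c.valid hxy
  simp only [coe_compl, Set.mem_compl_iff, mem_coe, Finset.mem_filter, Finset.mem_univ, true_and]
  omega

structure IsDoubletonBipartition (G : SimpleGraph V) (U : Finset V) (a₁ b₁ a₂ b₂ : V) : Prop where
  adj₁ : G.Adj a₁ b₁
  adj₂ : G.Adj a₂ b₂
  isBipartiteWith : (G.deleteEdges {s(a₁, b₁), s(a₂, b₂)}).IsBipartiteWith ↑U ↑Uᶜ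
  a₁_mem : a₁ ∈ U
  b₁_mem : b₁ ∈ U
  a₂_notMem : a₂ ∉ U
  b₂_notMem : b₂ ∉ U

lemma IsDoubletonBipartition.ne (hU : IsDoubletonBipartition G U a₁ b₁ a₂ b₂) :
    s(a₁, b₁) ≠ s(a₂, b₂) := fun h => by
  rcases Sym2.eq_iff.mp h with ⟨h, -⟩ | ⟨h, -⟩
  exacts [hU.a₂_notMem (h ▸ hU.a₁_mem), hU.b₂_notMem (h ▸ hU.a₁_mem)]

lemma IsDoubletonBipartition.symm (hU : IsDoubletonBipartition G U a₁ b₁ a₂ b₂) :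
    IsDoubletonBipartition G Uᶜ a₂ b₂ a₁ b₁ where
  adj₁ := hU.adj₂
  adj₂ := hU.adj₁
  isBipartiteWith := by
    rw [Set.pair_comm, compl_compl]
    exact hU.isBipartiteWith.symm
  a₁_mem := Finset.mem_compl.mpr hU.a₂_notMem
  b₁_mem := Finset.mem_compl.mpr hU.b₂_notMem
  a₂_notMem := Finset.notMem_compl.mpr hU.a₁_mem
  b₂_notMem := Finset.notMem_compl.mpr hU.b₁_mem

variable [DecidableRel G.Adj]

lemma mem_of_reachable_induce_compl {S : Set V} {X : Finset V}
    (hS : ∀ p ∈ G.interedges X Xᶜ, p.1 ∈ S) {x y : ↥Sᶜ} (hxy : (G.induce Sᶜ).Reachable x y)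
    (hx : x.1 ∈ X) : y.1 ∈ X := by
  obtain ⟨w⟩ := hxy
  induction w with
  | nil => exact hx
  | @cons u v _ huv _ ih =>
    refine ih (not_not.mp fun hv => u.2 (hS (u, v) ?_))
    exact (mk_mem_interedges_iff G).mpr ⟨hx, mem_compl.mpr hv, huv⟩

lemma three_le_card_interedges_compl_of_card_le_two (hdeg : ∀ v, 3 ≤ G.degree v)
    {X : Finset V} (hX : X.Nonempty) (hX₂ : #X ≤ 2) : 3 ≤ #(G.interedges X Xᶜ) := by
  have hout : ∀ x ∈ X, 4 ≤ #{y ∈ Xᶜ | G.Adj x y} + #X := by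
    intro x hx
    have hsub : G.neighborFinset x ⊆ X.erase x ∪ {y ∈ Xᶜ | G.Adj x y} := by
      intro y hy
      rw [mem_neighborFinset] at hy
      by_cases hyX : y ∈ X
      · exact mem_union_left _ (mem_erase.mpr ⟨hy.ne.symm, hyX⟩)
      · exact mem_union_right _ (mem_filter.mpr ⟨mem_compl.mpr hyX, hy⟩)
    have := (Finset.card_le_card hsub).trans (card_union_le _ _)
    rw [card_neighborFinset_eq_degree, card_erase_of_mem hx] at this
    have := hdeg x
    have := hX.card_pos
    omega
  have hsum : ∑ _x ∈ X, 4 ≤ ∑ x ∈ X, (#{y ∈ Xᶜ | G.Adj x y} + #X) := sum_le_sum hout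
  rw [sum_add_distrib, ← card_interedges_eq_sum] at hsum
  simp only [sum_const, smul_eq_mul] at hsum
  have := hX.card_pos
  interval_cases #X <;> omega

theorem three_le_card_interedges_compl (hdeg : ∀ v, 3 ≤ G.degree v)
    (hG : ∀ S : Set V, S.ncard ≤ 2 → (G.induce Sᶜ).Connected)
    {X : Finset V} (hX : X.Nonempty) (hXc : Xᶜ.Nonempty) : 3 ≤ #(G.interedges X Xᶜ) := by
  by_contra! hcut
  set S := (G.interedges X Xᶜ).image Prod.fst
  have hS : #S ≤ 2 := card_image_le.trans (by omega)
  by_cases hXS : X ⊆ S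
  · exact hcut.not_ge
      (three_le_card_interedges_compl_of_card_le_two hdeg hX ((Finset.card_le_card hXS).trans hS))
  -- otherwise the at most two endpoints in `X` of the cut edges separate `X` from `Xᶜ`
  obtain ⟨x, hxX, hxS⟩ := Finset.not_subset.mp hXS
  obtain ⟨y, hy⟩ := hXc
  have hyS : y ∉ S := fun h => by
    obtain ⟨p, hp, rfl⟩ := mem_image.mp h
    exact mem_compl.mp hy ((mem_interedges_iff G).mp hp).1
  have hreach := (hG S (by rwa [ncard_coe_finset])).preconnected ⟨x, hxS⟩ ⟨y, hyS⟩
  exact mem_compl.mp hy (mem_of_reachable_induce_compl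
    (fun p hp => mem_coe.mpr (mem_image_of_mem _ hp)) hreach hxX)

lemma card_filter_interedges_compl_le (X : Finset V) (a b : V) :
    #{p ∈ G.interedges X Xᶜ | s(p.1, p.2) = s(a, b)} ≤ if (a ∈ X ↔ b ∈ X) then 0 else 1 := by
  have key : ∀ p ∈ G.interedges X Xᶜ, s(p.1, p.2) = s(a, b) →
      p = (a, b) ∧ a ∈ X ∧ b ∉ X ∨ p = (b, a) ∧ b ∈ X ∧ a ∉ X := by
    intro p hp hpe
    obtain ⟨h₁, h₂, -⟩ := (mem_interedges_iff G).mp hp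
    rw [Finset.mem_compl] at h₂
    rcases Sym2.eq_iff.mp hpe with ⟨rfl, rfl⟩ | ⟨rfl, rfl⟩
    exacts [Or.inl ⟨rfl, h₁, h₂⟩, Or.inr ⟨rfl, h₁, h₂⟩]
  split_ifs with hab
  · refine Nat.le_zero.mpr (card_eq_zero.mpr (filter_eq_empty_iff.mpr fun p hp hpe => ?_))
    rcases key p hp hpe with ⟨-, h₁, h₂⟩ | ⟨-, h₁, h₂⟩ <;> tauto
  · refine card_le_one.mpr fun p hp q hq => ?_
    rw [mem_filter] at hp hq
    rcases key p hp.1 hp.2 with ⟨rfl, h⟩ | ⟨rfl, h⟩ <;>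
      rcases key q hq.1 hq.2 with ⟨rfl, h'⟩ | ⟨rfl, h'⟩ <;> tauto

variable (a₁ b₁ a₂ b₂) in
theorem card_interedges_compl_le_deleteEdges (X : Finset V) :
    #(G.interedges X Xᶜ) ≤ #((G.deleteEdges {s(a₁, b₁), s(a₂, b₂)}).interedges X Xᶜ) +
      (if (a₁ ∈ X ↔ b₁ ∈ X) then 0 else 1) + (if (a₂ ∈ X ↔ b₂ ∈ X) then 0 else 1) := by
  set H := G.deleteEdges {s(a₁, b₁), s(a₂, b₂)}
  have hsub : G.interedges X Xᶜ ⊆ H.interedges X Xᶜ ∪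
      {p ∈ G.interedges X Xᶜ | s(p.1, p.2) = s(a₁, b₁)} ∪
      {p ∈ G.interedges X Xᶜ | s(p.1, p.2) = s(a₂, b₂)} := by
    intro p hp
    obtain ⟨h₁, h₂, hadj⟩ := (mem_interedges_iff G).mp hp
    simp only [H, Finset.mem_union, Finset.mem_filter, mem_interedges_iff, deleteEdges_adj,
      Set.mem_insert_iff, Set.mem_singleton_iff]
    tauto
  calc #(G.interedges X Xᶜ)
      ≤ #(H.interedges X Xᶜ) + #{p ∈ G.interedges X Xᶜ | s(p.1, p.2) = s(a₁, b₁)} +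
          #{p ∈ G.interedges X Xᶜ | s(p.1, p.2) = s(a₂, b₂)} :=
        (Finset.card_le_card hsub).trans ((Finset.card_union_le _ _).trans
          (Nat.add_le_add_right (Finset.card_union_le _ _) _))
    _ ≤ _ := by gcongr <;> apply card_filter_interedges_compl_le

variable (a₁ b₁ a₂ b₂) in
theorem connected_deleteEdges_pair (hdeg : ∀ v, 3 ≤ G.degree v)
    (hG : ∀ S : Set V, S.ncard ≤ 2 → (G.induce Sᶜ).Connected) :
    (G.deleteEdges {s(a₁, b₁), s(a₂, b₂)}).Connected := by
  classical
  set H := G.deleteEdges {s(a₁, b₁), s(a₂, b₂)}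
  refine (connected_iff H).mpr ⟨fun x y => ?_, ⟨a₁⟩⟩
  by_contra hxy
  set R : Finset V := {z | H.Reachable x z}
  have hR : H.interedges R Rᶜ = ∅ := by
    refine eq_empty_iff_forall_notMem.mpr fun p hp => ?_
    obtain ⟨h₁, h₂, hadj⟩ := (mem_interedges_iff H).mp hp
    simp only [R, Finset.mem_compl, Finset.mem_filter, Finset.mem_univ, true_and] at h₁ h₂
    exact h₂ (h₁.trans hadj.reachable)
  have hle := card_interedges_compl_le_deleteEdges (G := G) a₁ b₁ a₂ b₂ R
  have hge := three_le_card_interedges_compl hdeg hG (X := R) ⟨x, by simp [R]⟩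
    ⟨y, by simpa [R] using hxy⟩
  rw [hR, Finset.card_empty] at hle
  split_ifs at hle <;> omega

lemma degree_deleteEdges_singleton_add {a b : V} (hab : G.Adj a b) (v : V) :
    (G.deleteEdges {s(a, b)}).degree v + (if a = v then 1 else 0) + (if b = v then 1 else 0) =
      G.degree v := by
  simp_rw [← card_neighborFinset_eq_degree]
  have hne := hab.ne
  by_cases hav : a = v
  · subst hav
    have : (G.deleteEdges {s(a, b)}).neighborFinset a = (G.neighborFinset a).erase b := by
      ext y
      simp [deleteEdges_adj, hne, and_comm]
    rw [this, card_erase_of_mem ((mem_neighborFinset G a b).mpr hab), if_pos rfl, if_neg hne.symm]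
    have := card_pos.mpr ⟨b, (mem_neighborFinset G a b).mpr hab⟩
    omega
  by_cases hbv : b = v
  · subst hbv
    have : (G.deleteEdges {s(a, b)}).neighborFinset b = (G.neighborFinset b).erase a := by
      ext y
      simp [deleteEdges_adj, hne.symm, and_comm]
    rw [this, card_erase_of_mem ((mem_neighborFinset G b a).mpr hab.symm), if_neg hav, if_pos rfl]
    have := card_pos.mpr ⟨a, (mem_neighborFinset G b a).mpr hab.symm⟩
    omega
  · have : (G.deleteEdges {s(a, b)}).neighborFinset v = G.neighborFinset v := by
      ext y
      simp only [mem_neighborFinset, deleteEdges_adj, Set.mem_singleton_iff, and_iff_left_iff_imp]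
      rintro - h
      rcases Sym2.eq_iff.mp h with ⟨h, -⟩ | ⟨h, -⟩
      exacts [hav h.symm, hbv h.symm]
    simp [this, hav, hbv]

lemma sum_degree_deleteEdges_pair_add (h₁ : G.Adj a₁ b₁) (h₂ : G.Adj a₂ b₂)
    (hne : s(a₁, b₁) ≠ s(a₂, b₂)) (S : Finset V) :
    ∑ v ∈ S, (G.deleteEdges {s(a₁, b₁), s(a₂, b₂)}).degree v +
      ((if a₁ ∈ S then 1 else 0) + (if b₁ ∈ S then 1 else 0) +
        (if a₂ ∈ S then 1 else 0) + (if b₂ ∈ S then 1 else 0)) = ∑ v ∈ S, G.degree v := by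
  have h₂' : (G.deleteEdges {s(a₁, b₁)}).Adj a₂ b₂ := by
    simpa [deleteEdges_adj, h₂] using hne.symm
  have hv : ∀ v, (G.deleteEdges {s(a₁, b₁), s(a₂, b₂)}).degree v +
      ((if a₁ = v then 1 else 0) + (if b₁ = v then 1 else 0) +
        (if a₂ = v then 1 else 0) + (if b₂ = v then 1 else 0)) = G.degree v := by
    intro v
    have hdeg : ((G.deleteEdges {s(a₁, b₁)}).deleteEdges {s(a₂, b₂)}).degree v =
        (G.deleteEdges {s(a₁, b₁), s(a₂, b₂)}).degree v := by
      convert rfl using 2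
      rw [deleteEdges_deleteEdges, Set.singleton_union]
    have := degree_deleteEdges_singleton_add h₁ v
    have := degree_deleteEdges_singleton_add h₂' v
    omega
  simp only [← Finset.sum_congr rfl fun v _ => hv v, sum_add_distrib, sum_ite_eq]

lemma IsBipartiteWith.neighborhood_subset_compl {U A : Finset V} (hG : G.IsBipartiteWith ↑U ↑Uᶜ)
    (hA : A ⊆ U) : G.neighborhood A ⊆ Uᶜ := fun t ht => by
  obtain ⟨a, ha, hat⟩ := mem_neighborhood.mp ht
  simpa using hG.mem_of_mem_adj (mem_coe.mpr (hA ha)) hat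

lemma degree_eq_card_filter_add_card_filter_compl (X : Finset V) (x : V) :
    G.degree x = #{y ∈ X | G.Adj x y} + #{y ∈ Xᶜ | G.Adj x y} := by
  rw [← card_neighborFinset_eq_degree, ← card_filter_add_card_filter_not (· ∈ X)]
  congr 2 <;> ext y <;> simp [and_comm]

theorem IsBipartiteWith.card_interedges_add_sum_degree {U A : Finset V}
    (hG : G.IsBipartiteWith ↑U ↑Uᶜ) (hA : A ⊆ U) :
    #(G.interedges (A ∪ G.neighborhood A) (A ∪ G.neighborhood A)ᶜ) + ∑ a ∈ A, G.degree a =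
      ∑ t ∈ G.neighborhood A, G.degree t := by
  set N := G.neighborhood A
  set X := A ∪ N
  have hN : ∀ t ∈ N, t ∉ U := fun t ht => Finset.mem_compl.mp (hG.neighborhood_subset_compl hA ht)
  have hAN : Disjoint A N := Finset.disjoint_left.mpr fun t htA htN => hN t htN (hA htA)
  have hA_out : ∀ a ∈ A, #{y ∈ Xᶜ | G.Adj a y} = 0 := fun a ha => by
    refine card_eq_zero.mpr (filter_eq_empty_iff.mpr fun y hy hay => ?_)
    exact Finset.mem_compl.mp hy (mem_union_right _ (mem_neighborhood.mpr ⟨a, ha, hay⟩))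
  have hA_in : ∀ a ∈ A, G.degree a = #{y ∈ N | G.Adj a y} := fun a ha => by
    rw [degree_eq_card_filter_add_card_filter_compl X, hA_out a ha, add_zero]
    congr 1
    ext y
    simp only [X, Finset.mem_filter, Finset.mem_union, and_congr_left_iff]
    exact fun hay => ⟨fun h => h.resolve_left fun hyA => hN y (mem_neighborhood.mpr ⟨a, ha, hay⟩)
      (hA hyA), Or.inr⟩
  have hN_in : ∀ t ∈ N, #{y ∈ X | G.Adj t y} = #{y ∈ A | G.Adj t y} := fun t ht => by
    congr 1
    ext y
    simp only [X, Finset.mem_filter, Finset.mem_union, and_congr_left_iff]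
    refine fun hty => ⟨fun h => h.resolve_right fun hyN => hN y hyN ?_, Or.inl⟩
    simpa [hN t ht] using hG.mem_of_adj hty
  have hA_N : ∑ a ∈ A, #{y ∈ N | G.Adj a y} = ∑ t ∈ N, #{y ∈ A | G.Adj t y} := by
    simpa [bipartiteAbove, bipartiteBelow, G.adj_comm] using
      sum_card_bipartiteAbove_eq_sum_card_bipartiteBelow G.Adj (s := A) (t := N)
  calc #(G.interedges X Xᶜ) + ∑ a ∈ A, G.degree a
      = ∑ t ∈ N, #{y ∈ Xᶜ | G.Adj t y} + ∑ t ∈ N, #{y ∈ A | G.Adj t y} := by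
        rw [card_interedges_eq_sum, sum_union hAN, sum_congr rfl hA_out, sum_const_zero, zero_add,
          sum_congr rfl hA_in, hA_N]
    _ = ∑ t ∈ N, G.degree t := by
        rw [← sum_add_distrib]
        refine sum_congr rfl fun t ht => ?_
        rw [degree_eq_card_filter_add_card_filter_compl X, hN_in t ht, add_comm]

theorem exists_isMatching_verts_eq_of_forall_card_le {X Y : Finset V} (hXY : Disjoint X Y)
    (hcard : #X = #Y) (hall : ∀ A ⊆ X, #A ≤ #(G.neighborhood A ∩ Y)) :
    ∃ M : G.Subgraph, M.verts = ↑X ∪ ↑Y ∧ M.IsMatching := by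
  obtain ⟨f, hf_inj, hf⟩ := (all_card_le_biUnion_card_iff_exists_injective
    fun x : (X : Set V) => ({y ∈ Y | G.Adj x y} : Finset V)).mp fun s => by
      refine (card_map (Function.Embedding.subtype _)).symm.le.trans
        ((hall _ fun x hx => ?_).trans (Finset.card_le_card fun y hy => ?_))
      · obtain ⟨x, -, rfl⟩ := mem_map.mp hx
        exact x.2
      · obtain ⟨hy, hyY⟩ := mem_inter.mp hy
        obtain ⟨a, ha, hay⟩ := mem_neighborhood.mp hy
        obtain ⟨x, hx, rfl⟩ := mem_map.mp ha
        exact mem_biUnion.mpr ⟨x, hx, Finset.mem_filter.mpr ⟨hyY, hay⟩⟩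
  have hfY : ∀ x, f x ∈ Y := fun x => (Finset.mem_filter.mp (hf x)).1
  let g : ↥(X : Set V) → ↥(Y : Set V) := fun x => ⟨f x, hfY x⟩
  have hg : Function.Bijective g := by
    rw [Fintype.bijective_iff_injective_and_card]
    exact ⟨fun x x' h => hf_inj (congrArg Subtype.val h), by simp [hcard]⟩
  exact Subgraph.IsMatching.exists_of_disjoint_sets_of_equiv (disjoint_coe.mpr hXY)
    (Equiv.ofBijective g hg) fun x => (Finset.mem_filter.mp (hf x)).2

theorem exists_isDoubletonBipartition (hcubic : ∀ v, G.degree v = 3) (h₁ : G.Adj a₁ b₁)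
    (h₂ : G.Adj a₂ b₂) (hne : s(a₁, b₁) ≠ s(a₂, b₂)) (hG : ¬ G.Colorable 2)
    (hH : (G.deleteEdges {s(a₁, b₁), s(a₂, b₂)}).Colorable 2) :
    ∃ U, IsDoubletonBipartition G U a₁ b₁ a₂ b₂ := by
  obtain ⟨U, hU⟩ := exists_isBipartiteWith_compl hH
  have hsum := isBipartiteWith_sum_degrees_eq hU
  have hdegU := sum_degree_deleteEdges_pair_add h₁ h₂ hne U
  have hdegUc := sum_degree_deleteEdges_pair_add h₁ h₂ hne Uᶜ
  simp only [hcubic, sum_const, smul_eq_mul, Finset.mem_compl] at hdegU hdegUc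
  -- `3 * (#U - #Uᶜ) = 2 * k - 4` for the number `k` of ends of `e₁, e₂` in `U`, so `k = 2`
  have hcount : (if a₁ ∈ U then 1 else 0) + (if b₁ ∈ U then 1 else 0) +
      ((if a₂ ∈ U then 1 else 0) + (if b₂ ∈ U then 1 else 0)) = 2 := by
    split_ifs at hdegU hdegUc ⊢ <;> omega
  have hcases : (a₁ ∈ U ∧ b₁ ∈ U ∧ a₂ ∉ U ∧ b₂ ∉ U) ∨ (a₁ ∉ U ∧ b₁ ∉ U ∧ a₂ ∈ U ∧ b₂ ∈ U) ∨
      ((a₁ ∈ U ↔ b₁ ∉ U) ∧ (a₂ ∈ U ↔ b₂ ∉ U)) := by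
    split_ifs at hcount <;> first | omega | tauto
  rcases hcases with ⟨ha₁, hb₁, ha₂, hb₂⟩ | ⟨ha₁, hb₁, ha₂, hb₂⟩ | ⟨hc₁, hc₂⟩
  · exact ⟨U, h₁, h₂, hU, ha₁, hb₁, ha₂, hb₂⟩
  · refine ⟨Uᶜ, h₁, h₂, by rw [compl_compl]; exact hU.symm, ?_, ?_, ?_, ?_⟩ <;> simpa
  · refine absurd (hU.of_deleteEdges_pair ?_ ?_).isBipartite hG <;>
      simp only [coe_compl, Set.mem_compl_iff, mem_coe] <;> tauto

namespace IsDoubletonBipartition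

variable {U : Finset V}

theorem card_eq_card_compl (hcubic : ∀ v, G.degree v = 3)
    (hU : IsDoubletonBipartition G U a₁ b₁ a₂ b₂) : #U = #Uᶜ := by
  have hsum := isBipartiteWith_sum_degrees_eq hU.isBipartiteWith
  have hU₁ := sum_degree_deleteEdges_pair_add hU.adj₁ hU.adj₂ hU.ne U
  have hU₂ := sum_degree_deleteEdges_pair_add hU.adj₁ hU.adj₂ hU.ne Uᶜ
  simp only [hcubic, sum_const, smul_eq_mul, Finset.mem_compl, hU.a₁_mem, hU.b₁_mem,
    hU.a₂_notMem, hU.b₂_notMem, if_true, if_false, not_true_eq_false, not_false_eq_true] at hU₁ hU₂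
  omega

/-- Counting the edges that leave `A ∪ N`: the last two summands record whether `e₁`, `e₂` are
among them. -/
theorem three_mul_card_add_le (hcubic : ∀ v, G.degree v = 3)
    (hG : ∀ S : Set V, S.ncard ≤ 2 → (G.induce Sᶜ).Connected)
    (hU : IsDoubletonBipartition G U a₁ b₁ a₂ b₂) {A : Finset V} (hAU : A ⊆ U) (hA : A.Nonempty)
    {z : V} (hzU : z ∈ U) (hzA : z ∉ A) :
    let N := (G.deleteEdges {s(a₁, b₁), s(a₂, b₂)}).neighborhood A
    3 * #A + 3 + ((if a₂ ∈ N then 1 else 0) + (if b₂ ∈ N then 1 else 0)) ≤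
      3 * #N + ((if a₁ ∈ A then 1 else 0) + (if b₁ ∈ A then 1 else 0)) +
        (if (a₁ ∈ A ↔ b₁ ∈ A) then 0 else 1) + (if (a₂ ∈ N ↔ b₂ ∈ N) then 0 else 1) := by
  intro N
  set X := A ∪ N
  have hNU : ∀ v ∈ N, v ∉ U := fun v hv =>
    Finset.mem_compl.mp (hU.isBipartiteWith.neighborhood_subset_compl hAU hv)
  have hmemU : ∀ v ∈ U, (v ∈ X ↔ v ∈ A) := fun v hv => by
    simp [X, show v ∉ N from fun h => hNU v h hv]
  have hmemUc : ∀ v ∉ U, (v ∈ X ↔ v ∈ N) := fun v hv => by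
    simp [X, show v ∉ A from fun h => hv (hAU h)]
  have hcut : #((G.deleteEdges _).interedges X Xᶜ) + ∑ a ∈ A, (G.deleteEdges _).degree a =
      ∑ t ∈ N, (G.deleteEdges _).degree t :=
    hU.isBipartiteWith.card_interedges_add_sum_degree hAU
  have hdegA := sum_degree_deleteEdges_pair_add hU.adj₁ hU.adj₂ hU.ne A
  have hdegN := sum_degree_deleteEdges_pair_add hU.adj₁ hU.adj₂ hU.ne N
  simp only [hcubic, sum_const, smul_eq_mul] at hdegA hdegN
  have hGH := card_interedges_compl_le_deleteEdges (G := G) a₁ b₁ a₂ b₂ X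
  have h3 := three_le_card_interedges_compl (fun v => (hcubic v).ge) hG (X := X)
    (hA.mono subset_union_left) ⟨z, Finset.mem_compl.mpr fun h => hzA ((hmemU z hzU).mp h)⟩
  simp only [hmemU a₁ hU.a₁_mem, hmemU b₁ hU.b₁_mem, hmemUc a₂ hU.a₂_notMem,
    hmemUc b₂ hU.b₂_notMem] at hGH
  have : a₂ ∉ A := fun h => hU.a₂_notMem (hAU h)
  have : b₂ ∉ A := fun h => hU.b₂_notMem (hAU h)
  have : a₁ ∉ N := fun h => hNU a₁ h hU.a₁_mem
  have : b₁ ∉ N := fun h => hNU b₁ h hU.b₁_mem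
  simp only [*, if_false, add_zero, zero_add] at hdegA hdegN
  omega

theorem card_lt_card_neighborhood (hcubic : ∀ v, G.degree v = 3)
    (hG : ∀ S : Set V, S.ncard ≤ 2 → (G.induce Sᶜ).Connected)
    (hU : IsDoubletonBipartition G U a₁ b₁ a₂ b₂) {A : Finset V} (hAU : A ⊆ U) (hA : A.Nonempty)
    {z : V} (hzU : z ∈ U) (hzA : z ∉ A) :
    #A < #((G.deleteEdges {s(a₁, b₁), s(a₂, b₂)}).neighborhood A) := by
  have key := hU.three_mul_card_add_le hcubic hG hAU hA hzU hzA
  set N := (G.deleteEdges {s(a₁, b₁), s(a₂, b₂)}).neighborhood A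
  by_cases a₁ ∈ A <;> by_cases b₁ ∈ A <;> by_cases a₂ ∈ N <;> by_cases b₂ ∈ N <;>
    simp_all <;> omega

theorem card_le_card_neighborhood_erase (hcubic : ∀ v, G.degree v = 3)
    (hG : ∀ S : Set V, S.ncard ≤ 2 → (G.induce Sᶜ).Connected)
    (hU : IsDoubletonBipartition G U a₁ b₁ a₂ b₂) {A : Finset V} (hAU : A ⊆ U)
    (ha₁ : a₁ ∉ A) (hb₁ : b₁ ∉ A) :
    #A ≤ #((((G.deleteEdges {s(a₁, b₁), s(a₂, b₂)}).neighborhood A).erase a₂).erase b₂) := by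
  rcases A.eq_empty_or_nonempty with rfl | hA
  · simp
  have key := hU.three_mul_card_add_le hcubic hG hAU hA hU.a₁_mem ha₁
  set N := (G.deleteEdges {s(a₁, b₁), s(a₂, b₂)}).neighborhood A
  have hne : b₂ ≠ a₂ := hU.adj₂.ne.symm
  simp only [card_erase_eq_ite, mem_erase, hne, ne_eq, not_false_eq_true, true_and]
  by_cases a₂ ∈ N <;> by_cases b₂ ∈ N <;> simp_all <;> omega

theorem exists_isPerfectMatching_mem_edgeSet_of_mem (hcubic : ∀ v, G.degree v = 3)
    (hG : ∀ S : Set V, S.ncard ≤ 2 → (G.induce Sᶜ).Connected)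
    (hU : IsDoubletonBipartition G U a₁ b₁ a₂ b₂) {u v : V} (hu : u ∈ U)
    (huv : (G.deleteEdges {s(a₁, b₁), s(a₂, b₂)}).Adj u v) :
    ∃ M : (G.deleteEdges {s(a₁, b₁), s(a₂, b₂)}).Subgraph,
      M.IsPerfectMatching ∧ s(u, v) ∈ M.edgeSet := by
  set H := G.deleteEdges {s(a₁, b₁), s(a₂, b₂)}
  have hv : v ∈ Uᶜ := by simpa using hU.isBipartiteWith.mem_of_mem_adj (mem_coe.mpr hu) huv
  obtain ⟨M, hMv, hM⟩ := exists_isMatching_verts_eq_of_forall_card_le (G := H)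
    (X := U.erase u) (Y := Uᶜ.erase v)
    (disjoint_compl_right.mono (erase_subset _ _) (erase_subset _ _))
    (by rw [card_erase_of_mem hu, card_erase_of_mem hv, hU.card_eq_card_compl hcubic])
    fun A hA => by
      rcases A.eq_empty_or_nonempty with rfl | hAne
      · simp
      have hAU := hA.trans (erase_subset _ _)
      have := hU.card_lt_card_neighborhood hcubic hG hAU hAne hu fun h => by simpa using hA h
      calc #A ≤ #(H.neighborhood A) - 1 := Nat.le_sub_one_of_lt this
        _ ≤ #((H.neighborhood A).erase v) := pred_card_le_card_erase
        _ ≤ #(H.neighborhood A ∩ Uᶜ.erase v) := Finset.card_le_card fun y hy => by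
          obtain ⟨hyv, hy⟩ := mem_erase.mp hy
          exact mem_inter.mpr
            ⟨hy, mem_erase.mpr ⟨hyv, hU.isBipartiteWith.neighborhood_subset_compl hAU hy⟩⟩
  refine ⟨M ⊔ H.subgraphOfAdj huv, ⟨hM.sup_subgraphOfAdj huv (by simp [hMv, hu])
    (by simp [hMv, Finset.mem_compl.mp hv]), fun w => ?_⟩, by simp⟩
  by_cases hw : w ∈ U <;> simp [hMv, hw] <;> tauto

theorem exists_isPerfectMatching_mem_edgeSet (hcubic : ∀ v, G.degree v = 3)
    (hG : ∀ S : Set V, S.ncard ≤ 2 → (G.induce Sᶜ).Connected)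
    (hU : IsDoubletonBipartition G U a₁ b₁ a₂ b₂) {u v : V}
    (huv : (G.deleteEdges {s(a₁, b₁), s(a₂, b₂)}).Adj u v) :
    ∃ M : (G.deleteEdges {s(a₁, b₁), s(a₂, b₂)}).Subgraph,
      M.IsPerfectMatching ∧ s(u, v) ∈ M.edgeSet := by
  by_cases hu : u ∈ U
  · exact hU.exists_isPerfectMatching_mem_edgeSet_of_mem hcubic hG hu huv
  · have hv : v ∈ U := by simpa [hu] using hU.isBipartiteWith.mem_of_adj huv
    rw [Sym2.eq_swap (a := u)]
    exact hU.exists_isPerfectMatching_mem_edgeSet_of_mem hcubic hG hv huv.symm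

theorem exists_isPerfectMatching_fst_snd_mem_edgeSet (hcubic : ∀ v, G.degree v = 3)
    (hG : ∀ S : Set V, S.ncard ≤ 2 → (G.induce Sᶜ).Connected)
    (hU : IsDoubletonBipartition G U a₁ b₁ a₂ b₂) :
    ∃ M : G.Subgraph, M.IsPerfectMatching ∧ s(a₁, b₁) ∈ M.edgeSet ∧ s(a₂, b₂) ∈ M.edgeSet := by
  have ha₂ : a₂ ∈ Uᶜ := Finset.mem_compl.mpr hU.a₂_notMem
  have hb₂ : b₂ ∈ Uᶜ := Finset.mem_compl.mpr hU.b₂_notMem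
  obtain ⟨M, hMv, hM⟩ := exists_isMatching_verts_eq_of_forall_card_le (G := G)
    (X := (U.erase a₁).erase b₁) (Y := (Uᶜ.erase a₂).erase b₂)
    (disjoint_compl_right.mono ((erase_subset _ _).trans (erase_subset _ _))
      ((erase_subset _ _).trans (erase_subset _ _)))
    (by
      rw [card_erase_of_mem (mem_erase.mpr ⟨hU.adj₁.ne.symm, hU.b₁_mem⟩), card_erase_of_mem
        hU.a₁_mem, card_erase_of_mem (mem_erase.mpr ⟨hU.adj₂.ne.symm, hb₂⟩),
        card_erase_of_mem ha₂, hU.card_eq_card_compl hcubic])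
    fun A hA => by
      have hA' : ∀ a ∈ A, a ≠ b₁ ∧ a ≠ a₁ ∧ a ∈ U := fun a ha => by simpa using hA ha
      have hAU : A ⊆ U := fun a ha => (hA' a ha).2.2
      refine (hU.card_le_card_neighborhood_erase hcubic hG hAU (fun h => (hA' _ h).2.1 rfl)
        (fun h => (hA' _ h).1 rfl)).trans (Finset.card_le_card fun y hy => ?_)
      obtain ⟨hyb, hya, hy⟩ := by simpa only [mem_erase] using hy
      obtain ⟨a, ha, hay⟩ := mem_neighborhood.mp hy
      exact mem_inter.mpr ⟨mem_neighborhood.mpr ⟨a, ha, (deleteEdges_le _ hay)⟩,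
        by simpa [hyb, hya] using hU.isBipartiteWith.neighborhood_subset_compl hAU hy⟩
  have hM₁ := hM.sup_subgraphOfAdj hU.adj₁ (by simp [hMv, hU.a₁_mem]) (by simp [hMv, hU.b₁_mem])
  have hne : ∀ x ∈ U, ∀ y ∉ U, y ≠ x := fun x hx y hy h => hy (h ▸ hx)
  have hM₂ := hM₁.sup_subgraphOfAdj hU.adj₂
    (by simp [hMv, hU.a₂_notMem, hne _ hU.a₁_mem _ hU.a₂_notMem, hne _ hU.b₁_mem _ hU.a₂_notMem])
    (by simp [hMv, hU.b₂_notMem, hne _ hU.a₁_mem _ hU.b₂_notMem, hne _ hU.b₁_mem _ hU.b₂_notMem])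
  refine ⟨M ⊔ G.subgraphOfAdj hU.adj₁ ⊔ G.subgraphOfAdj hU.adj₂, ⟨hM₂, fun w => ?_⟩,
    by simp, by simp⟩
  by_cases hw : w ∈ U <;> simp [hMv, hw] <;> tauto

theorem snd_mem_edgeSet_of_fst_mem_edgeSet (hcubic : ∀ v, G.degree v = 3)
    (hU : IsDoubletonBipartition G U a₁ b₁ a₂ b₂) {M : G.Subgraph} (hM : M.IsPerfectMatching)
    (h₁ : s(a₁, b₁) ∈ M.edgeSet) : s(a₂, b₂) ∈ M.edgeSet := by
  by_contra h₂
  choose p hp using fun w => (hM.1 (hM.2 w)).exists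
  -- the partners of the vertices outside `U` are distinct vertices of `U` other than `a₁, b₁`
  have hmaps : ∀ w ∈ Uᶜ, p w ∈ (U.erase a₁).erase b₁ := by
    intro w hw
    have hwU := Finset.mem_compl.mp hw
    have hpU : p w ∈ U := by
      by_cases he₁ : s(w, p w) = s(a₁, b₁)
      · rcases Sym2.eq_iff.mp he₁ with ⟨rfl, -⟩ | ⟨rfl, -⟩
        exacts [absurd hU.a₁_mem hwU, absurd hU.b₁_mem hwU]
      by_cases he₂ : s(w, p w) = s(a₂, b₂)
      · exact absurd (he₂ ▸ (M.mem_edgeSet.mpr (hp w))) h₂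
      have hH : (G.deleteEdges {s(a₁, b₁), s(a₂, b₂)}).Adj w (p w) := by
        simp [M.adj_sub (hp w), he₁, he₂]
      simpa [hwU] using hU.isBipartiteWith.mem_of_adj hH
    have ha₁ : p w ≠ a₁ := fun h => hwU
      (hM.1.eq_of_adj_right (h ▸ hp w) (M.mem_edgeSet.mp h₁).symm ▸ hU.b₁_mem)
    have hb₁ : p w ≠ b₁ := fun h => hwU
      (hM.1.eq_of_adj_right (h ▸ hp w) (M.mem_edgeSet.mp h₁) ▸ hU.a₁_mem)
    simp [hpU, ha₁, hb₁]
  have hinj : Set.InjOn p ↑Uᶜ := fun w _ w' _ h =>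
    hM.1.eq_of_adj_right (hp w) (h ▸ hp w')
  have := card_le_card_of_injOn p hmaps hinj
  rw [card_erase_of_mem (mem_erase.mpr ⟨hU.adj₁.ne.symm, hU.b₁_mem⟩), card_erase_of_mem hU.a₁_mem,
    ← hU.card_eq_card_compl hcubic] at this
  have := card_pos.mpr ⟨a₁, hU.a₁_mem⟩
  omega

theorem matchingCovered (hcubic : ∀ v, G.degree v = 3)
    (hG : ∀ S : Set V, S.ncard ≤ 2 → (G.induce Sᶜ).Connected)
    (hU : IsDoubletonBipartition G U a₁ b₁ a₂ b₂) : MatchingCovered G := by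
  have hconn := hG ∅ (by simp)
  rw [Set.compl_empty] at hconn
  refine ⟨(induceUnivIso G).connected_iff.mp hconn, ⟨s(a₁, b₁), hU.adj₁⟩, fun e he => ?_⟩
  induction e using Sym2.ind with | _ x y => ?_
  obtain ⟨M, hM, he₁, he₂⟩ := hU.exists_isPerfectMatching_fst_snd_mem_edgeSet hcubic hG
  by_cases h₁ : s(x, y) = s(a₁, b₁)
  · exact ⟨M, hM, h₁ ▸ he₁⟩
  by_cases h₂ : s(x, y) = s(a₂, b₂)
  · exact ⟨M, hM, h₂ ▸ he₂⟩
  have hxy : (G.deleteEdges {s(a₁, b₁), s(a₂, b₂)}).Adj x y := by simp_all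
  obtain ⟨M', hM', he'⟩ := hU.exists_isPerfectMatching_mem_edgeSet hcubic hG hxy
  obtain ⟨M, hM, he, -⟩ := hM'.exists_map_of_le (deleteEdges_le _) he'
  exact ⟨M, hM, he⟩

theorem matchingCovered_deleteEdges (hcubic : ∀ v, G.degree v = 3)
    (hG : ∀ S : Set V, S.ncard ≤ 2 → (G.induce Sᶜ).Connected)
    (hU : IsDoubletonBipartition G U a₁ b₁ a₂ b₂) :
    MatchingCovered (G.deleteEdges {s(a₁, b₁), s(a₂, b₂)}) := by
  have hconn := connected_deleteEdges_pair a₁ b₁ a₂ b₂ (fun v => (hcubic v).ge) hG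
  have : Nontrivial V := nontrivial_of_ne a₁ b₁ hU.adj₁.ne
  obtain ⟨y, hy⟩ := hconn.preconnected.exists_adj_of_nontrivial a₁
  refine ⟨hconn, ⟨s(a₁, y), hy⟩, fun e he => ?_⟩
  induction e using Sym2.ind with
  | _ x y => exact hU.exists_isPerfectMatching_mem_edgeSet hcubic hG he

theorem not_removable_snd (hcubic : ∀ v, G.degree v = 3)
    (hU : IsDoubletonBipartition G U a₁ b₁ a₂ b₂) : ¬ Removable G s(a₂, b₂) := by
  rintro ⟨-, -, -, hpm⟩
  obtain ⟨M, hM, he⟩ := hpm s(a₁, b₁) ((deleteEdges_adj ..).mpr ⟨hU.adj₁, hU.ne⟩)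
  obtain ⟨M', hM', he', hsub⟩ := hM.exists_map_of_le (deleteEdges_le _) he
  simpa using hsub (hU.snd_mem_edgeSet_of_fst_mem_edgeSet hcubic hM' he')

end IsDoubletonBipartition

end SimpleGraph

/-- a 3-connected cubic nonbipartite graph `G` with two edges
whose removal makes it bipartite is matching covered with removable doubleton
`{e₁, e₂}`. -/
theorem stmt16 [Fintype V] [DecidableEq V] (G : SimpleGraph V)
    [DecidableRel G.Adj]
    (hcubic : ∀ v : V, G.degree v = 3) (h3 : ThreeConnected G)
    (hnonbip : ¬ G.Colorable 2)
    (a1 b1 a2 b2 : V) (he1 : G.Adj a1 b1) (he2 : G.Adj a2 b2)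
    (hnee : s(a1, b1) ≠ s(a2, b2))
    (hbip : (G.deleteEdges {s(a1, b1), s(a2, b2)}).Colorable 2) :
    MatchingCovered G ∧
      ¬ Removable G s(a1, b1) ∧ ¬ Removable G s(a2, b2) ∧
      MatchingCovered (G.deleteEdges {s(a1, b1), s(a2, b2)}) := by
  obtain ⟨U, hU⟩ := exists_isDoubletonBipartition hcubic he1 he2 hnee hnonbip hbip
  exact ⟨hU.matchingCovered hcubic h3.2, hU.symm.not_removable_snd hcubic,
    hU.not_removable_snd hcubic, hU.matchingCovered_deleteEdges hcubic h3.2⟩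
end
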